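/- arXiv:1905.07771 — 8 statements merged into one kernel-verified Lean document; each statement's English description precedes it below -/
import Mathlib

section
/- Under the stated assumptions, the matrix T̂ = Ŵ⁻¹V'M_F satisfies T̂T̂' = Ŵ⁻¹(I_l − σ₀²D⁻¹Ŵ⁻¹) and, with Û = V'M_F V·D + σ₀²I_l, also T̂T̂' = DÛ⁻¹(I_l − σ₀²Û⁻¹). -/
/-!
`M_F` is a symmetric idempotent (this is where the rank hypothesis enters: it makes `F'F`
invertible), so `T̂T̂' = Ŵ⁻¹ W Ŵ⁻¹`. Since `W` is positive semidefinite and `σ₀²D⁻¹` positive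
definite, `Ŵ` is invertible, and substituting `W = Ŵ - σ₀²D⁻¹` gives the first form.
The second follows from `Û = Ŵ D`, whence `D Û⁻¹ = Ŵ⁻¹` and `Û⁻¹ = D⁻¹ Ŵ⁻¹`.
-/

open Matrix

namespace Matrix

variable {m n R : Type*}

theorem linearIndependent_col_of_rank_eq_card [Fintype n] [Field R] {A : Matrix m n R}
    (h : A.rank = Fintype.card n) : LinearIndependent R A.col := by
  rw [linearIndependent_iff_card_eq_finrank_span, ← h, rank_eq_finrank_span_cols]
  rfl

theorem isUnit_transpose_mul_self_of_linearIndependent_col [Fintype m] [Fintype n]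
    [DecidableEq n] [Field R] [LinearOrder R] [IsStrictOrderedRing R] {A : Matrix m n R}
    (h : LinearIndependent R A.col) : IsUnit (Aᵀ * A) := by
  rw [← mulVec_injective_iff_isUnit, ← coe_mulVecLin, ← LinearMap.ker_eq_bot,
    ker_mulVecLin_transpose_mul_self, LinearMap.ker_eq_bot, coe_mulVecLin, mulVec_injective_iff]
  exact h

/-- The projector onto the column space of `A`, so that `M_F = 1 - colProj F`
(junk when `Aᵀ * A` is singular). -/
noncomputable def colProj [Fintype m] [Fintype n] [DecidableEq n] [CommRing R]
    (A : Matrix m n R) : Matrix m m R :=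
  A * (Aᵀ * A)⁻¹ * Aᵀ

section colProj

variable [Fintype m] [Fintype n] [DecidableEq n] [CommRing R]

theorem isSymm_colProj (A : Matrix m n R) : (colProj A).IsSymm := by
  simp only [IsSymm, colProj, transpose_mul, transpose_nonsing_inv, transpose_transpose,
    Matrix.mul_assoc]

theorem isIdempotentElem_colProj {A : Matrix m n R} (h : IsUnit (Aᵀ * A)) :
    IsIdempotentElem (colProj A) := by
  have hinv : (Aᵀ * A)⁻¹ * (Aᵀ * A) = 1 := nonsing_inv_mul _ ((isUnit_iff_isUnit_det _).mp h)
  calc colProj A * colProj A = A * ((Aᵀ * A)⁻¹ * (Aᵀ * A)) * (Aᵀ * A)⁻¹ * Aᵀ := by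
        simp only [colProj, Matrix.mul_assoc]
    _ = colProj A := by rw [hinv, Matrix.mul_one, colProj]

end colProj

section IsSymm

variable [Fintype m] {M : Matrix m m R}

theorem mul_mul_transpose_eq_of_isSymm_of_isIdempotentElem [CommRing R] (hMs : M.IsSymm)
    (hMi : IsIdempotentElem M) (B : Matrix n m R) : B * M * (B * M)ᵀ = B * M * Bᵀ := by
  rw [transpose_mul, hMs.eq, ← Matrix.mul_assoc, Matrix.mul_assoc B, hMi.eq]

theorem posSemidef_transpose_mul_mul_of_isSymm_of_isIdempotentElem [Fintype n]
    {M : Matrix m m ℝ} (hMs : M.IsSymm) (hMi : IsIdempotentElem M) (V : Matrix m n ℝ) :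
    (Vᵀ * M * V).PosSemidef := by
  have h := posSemidef_conjTranspose_mul_self (M * V)
  rwa [conjTranspose_eq_transpose_of_trivial, transpose_mul, hMs.eq, Matrix.mul_assoc,
    ← Matrix.mul_assoc M, hMi.eq, ← Matrix.mul_assoc] at h

end IsSymm

section Inverse

variable [Fintype n] [DecidableEq n] [CommRing R]

theorem inv_mul_sub_mul_inv {A : Matrix n n R} (hA : IsUnit A.det) (B : Matrix n n R) :
    A⁻¹ * (A - B) * A⁻¹ = A⁻¹ * (1 - B * A⁻¹) := by
  rw [Matrix.mul_sub, Matrix.sub_mul, nonsing_inv_mul _ hA, Matrix.one_mul, Matrix.mul_sub,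
    Matrix.mul_one, Matrix.mul_assoc]

theorem mul_inv_mul_cancel_right {D : Matrix n n R} (hD : IsUnit D.det) (A : Matrix n n R) :
    D * (A * D)⁻¹ = A⁻¹ := by
  rw [mul_inv_rev, ← Matrix.mul_assoc, mul_nonsing_inv _ hD, Matrix.one_mul]

end Inverse

end Matrix

theorem stmt_0_general {n k l : ℕ}
    (F : Matrix (Fin n) (Fin k) ℝ) (V : Matrix (Fin n) (Fin l) ℝ)
    (hrank : (Matrix.fromCols F V).rank = k + l)
    (σ0 : ℝ) (hσ0 : 0 < σ0)
    (σ : Fin l → ℝ) (hσ : ∀ j, 0 < σ j)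
    (D : Matrix (Fin l) (Fin l) ℝ) (hD : D = Matrix.diagonal σ)
    (Mf : Matrix (Fin n) (Fin n) ℝ) (hMf : Mf = 1 - F * (Fᵀ * F)⁻¹ * Fᵀ)
    (W : Matrix (Fin l) (Fin l) ℝ) (hW : W = Vᵀ * Mf * V)
    (What : Matrix (Fin l) (Fin l) ℝ) (hWhat : What = W + σ0 • D⁻¹)
    (Uhat : Matrix (Fin l) (Fin l) ℝ) (hUhat : Uhat = W * D + σ0 • (1 : Matrix (Fin l) (Fin l) ℝ))
    (That : Matrix (Fin l) (Fin n) ℝ) (hThat : That = What⁻¹ * Vᵀ * Mf) :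
    That * Thatᵀ = What⁻¹ * ((1 : Matrix (Fin l) (Fin l) ℝ) - σ0 • (D⁻¹ * What⁻¹)) ∧
    That * Thatᵀ = D * Uhat⁻¹ * ((1 : Matrix (Fin l) (Fin l) ℝ) - σ0 • Uhat⁻¹) := by
  have hcols : LinearIndependent ℝ (fromCols F V).col :=
    linearIndependent_col_of_rank_eq_card (by simpa using hrank)
  have hFF : IsUnit (Fᵀ * F) := isUnit_transpose_mul_self_of_linearIndependent_col
    (hcols.comp Sum.inl Sum.inl_injective :)
  have hMs : Mf.IsSymm := hMf ▸ isSymm_one.sub (isSymm_colProj F)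
  have hMi : IsIdempotentElem Mf := hMf ▸ (isIdempotentElem_colProj hFF).one_sub
  have hD_pd : D.PosDef := hD ▸ posDef_diagonal_iff.mpr hσ
  have hD_det : IsUnit D.det := hD_pd.det_pos.ne'.isUnit
  have hWhat_pd : What.PosDef := hWhat ▸ hW ▸
    PosDef.posSemidef_add (posSemidef_transpose_mul_mul_of_isSymm_of_isIdempotentElem hMs hMi V)
      (hD_pd.inv.smul hσ0)
  have hWhat_inv_symm : (What⁻¹).IsSymm := (isHermitian_iff_isSymm.mp hWhat_pd.isHermitian).inv
  have hTT : That * Thatᵀ = What⁻¹ * W * What⁻¹ := by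
    rw [hThat, mul_mul_transpose_eq_of_isSymm_of_isIdempotentElem hMs hMi, transpose_mul,
      transpose_transpose, hWhat_inv_symm.eq, hW]
    simp only [Matrix.mul_assoc]
  have hTT_What : That * Thatᵀ = What⁻¹ * (1 - σ0 • (D⁻¹ * What⁻¹)) := by
    rw [hTT, show W = What - σ0 • D⁻¹ by rw [hWhat]; abel,
      inv_mul_sub_mul_inv hWhat_pd.det_pos.ne'.isUnit, smul_mul_assoc]
  have hUhat_eq : Uhat = What * D := by
    rw [hUhat, hWhat, Matrix.add_mul, smul_mul_assoc, nonsing_inv_mul _ hD_det]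
  refine ⟨hTT_What, ?_⟩
  rw [hTT_What, hUhat_eq, mul_inv_mul_cancel_right hD_det, Matrix.mul_inv_rev]

/-- Lemma (basic properties of T̂), part (1):
`T̂T̂' = Ŵ⁻¹(I_l − σ₀²D⁻¹Ŵ⁻¹) = DÛ⁻¹(I_l − σ₀²Û⁻¹)`. -/
theorem stmt_0 {n k l : ℕ} (hn : 0 < n) (hk : 0 < k) (hl : 0 < l)
    (hnkl : k + l < n)
    (F : Matrix (Fin n) (Fin k) ℝ) (V : Matrix (Fin n) (Fin l) ℝ)
    (hrank : (Matrix.fromCols F V).rank = k + l)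
    (σ0 : ℝ) (hσ0 : 0 < σ0)
    (σ : Fin l → ℝ) (hσ : ∀ j, 0 < σ j)
    (D : Matrix (Fin l) (Fin l) ℝ) (hD : D = Matrix.diagonal σ)
    (Mf : Matrix (Fin n) (Fin n) ℝ) (hMf : Mf = 1 - F * (Fᵀ * F)⁻¹ * Fᵀ)
    (W : Matrix (Fin l) (Fin l) ℝ) (hW : W = Vᵀ * Mf * V)
    (What : Matrix (Fin l) (Fin l) ℝ) (hWhat : What = W + σ0 • D⁻¹)
    (Uhat : Matrix (Fin l) (Fin l) ℝ) (hUhat : Uhat = W * D + σ0 • (1 : Matrix (Fin l) (Fin l) ℝ))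
    (That : Matrix (Fin l) (Fin n) ℝ) (hThat : That = What⁻¹ * Vᵀ * Mf) :
    That * Thatᵀ = What⁻¹ * ((1 : Matrix (Fin l) (Fin l) ℝ) - σ0 • (D⁻¹ * What⁻¹)) ∧
    That * Thatᵀ = D * Uhat⁻¹ * ((1 : Matrix (Fin l) (Fin l) ℝ) - σ0 • Uhat⁻¹) :=
  stmt_0_general F V hrank σ0 hσ0 σ hσ D hD Mf hMf W hW What hWhat Uhat hUhat That hThat
end

section
/- Under the stated assumptions, with Σ = σ₀²I_n + VDV' the covariance matrix of the FDSLRM observation, the matrix T̂ = Ŵ⁻¹V'M_F satisfies T̂ΣT̂' = D − σ₀²Ŵ⁻¹ = D(I_l − σ₀²Û⁻¹). -/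
/-!
Write `Ŵ = W + σ₀²D⁻¹`. Since `M_F` is a symmetric idempotent (the rank condition makes `F'F`
invertible), `T̂ΣT̂' = Ŵ⁻¹ (V'M_F Σ M_F V) Ŵ⁻¹` and `V'M_F Σ M_F V = σ₀²W + WDW = Ŵ D W`, so
`T̂ΣT̂' = D W Ŵ⁻¹ = D (Ŵ - σ₀²D⁻¹) Ŵ⁻¹ = D - σ₀²Ŵ⁻¹`. The second form follows from `Û = Ŵ D`.
`Ŵ` is invertible because `W = (M_F V)'(M_F V)` is positive semidefinite and `D⁻¹` is positive
definite.
-/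

open Matrix

namespace Matrix

variable {m n l : Type*} [Fintype n]

theorem mulVec_injective_of_rank_eq_card {K : Type*} [Field K] {A : Matrix m n K}
    (hA : A.rank = Fintype.card n) : Function.Injective A.mulVec := by
  have hker : Module.finrank K (LinearMap.ker A.mulVecLin) = 0 := by
    have := LinearMap.finrank_range_add_finrank_ker A.mulVecLin
    rw [← rank, hA, Module.finrank_fintype_fun_eq_card] at this
    omega
  rw [← coe_mulVecLin, ← LinearMap.ker_eq_bot]
  exact Submodule.finrank_eq_zero.mp hker

theorem mulVec_injective_of_fromCols [Fintype l] {R : Type*} [Semiring R] {A : Matrix m n R}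
    {B : Matrix m l R} (h : Function.Injective (fromCols A B).mulVec) :
    Function.Injective A.mulVec := fun x y hxy =>
  (Sum.elim_eq_iff.1 (h (a₁ := Sum.elim x 0) (a₂ := Sum.elim y 0)
    (by simp only [fromCols_mulVec_sumElim, hxy]))).1

theorem isUnit_transpose_mul_self [Fintype m] [DecidableEq n] {K : Type*} [Field K]
    [LinearOrder K] [IsStrictOrderedRing K] {A : Matrix m n K}
    (hA : Function.Injective A.mulVec) : IsUnit (Aᵀ * A) := by
  rw [← mulVec_injective_iff_isUnit, ← coe_mulVecLin, ← LinearMap.ker_eq_bot,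
    ker_mulVecLin_transpose_mul_self, LinearMap.ker_eq_bot, coe_mulVecLin]
  exact hA

variable [Fintype m] {R : Type*} [CommRing R]

theorem transpose_mul_mul_eq_of_idempotent {M : Matrix m m R} (hMT : Mᵀ = M) (hMM : M * M = M)
    (V : Matrix m l R) : Vᵀ * M * V = (M * V)ᵀ * (M * V) := by
  rw [transpose_mul, hMT, Matrix.mul_assoc Vᵀ M (M * V), ← Matrix.mul_assoc M M V, hMM,
    Matrix.mul_assoc]

variable [Fintype l] [DecidableEq l]

theorem posDef_transpose_mul_mul_add_smul_inv {M : Matrix m m ℝ} (hMT : Mᵀ = M)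
    (hMM : M * M = M) (V : Matrix m l ℝ) {D : Matrix l l ℝ} (hD : D.PosDef) {s : ℝ}
    (hs : 0 < s) : (Vᵀ * M * V + s • D⁻¹).PosDef := by
  rw [transpose_mul_mul_eq_of_idempotent hMT hMM, ← conjTranspose_eq_transpose_of_trivial]
  exact PosDef.posSemidef_add (posSemidef_conjTranspose_mul_self _) (hD.inv.smul hs)

theorem add_smul_inv_mul {A D : Matrix l l R} (hD : IsUnit D) (s : R) :
    (A + s • D⁻¹) * D = A * D + s • 1 := by
  rw [Matrix.add_mul, Matrix.smul_mul, nonsing_inv_mul _ ((isUnit_iff_isUnit_det _).mp hD)]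

theorem mul_one_sub_smul_inv_mul {A D : Matrix l l R} (hD : IsUnit D) (s : R) :
    D * (1 - s • (A * D)⁻¹) = D - s • A⁻¹ := by
  rw [Matrix.mul_inv_rev, Matrix.mul_sub, Matrix.mul_one, Matrix.mul_smul, ← Matrix.mul_assoc,
    mul_nonsing_inv _ ((isUnit_iff_isUnit_det _).mp hD), Matrix.one_mul]

variable [DecidableEq m]

section residualMaker

variable [DecidableEq n]

/-- `M_F = I - F(F'F)⁻¹F'`, the projection onto the orthogonal complement of the columns of `F`
when `F'F` is invertible. -/
noncomputable def residualMaker (F : Matrix m n R) : Matrix m m R :=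
  1 - F * (Fᵀ * F)⁻¹ * Fᵀ

theorem transpose_residualMaker (F : Matrix m n R) : (residualMaker F)ᵀ = residualMaker F := by
  simp [residualMaker, transpose_nonsing_inv, Matrix.mul_assoc]

theorem residualMaker_mul_self {F : Matrix m n R} (hF : IsUnit (Fᵀ * F)) :
    residualMaker F * residualMaker F = residualMaker F := by
  have hFF : (Fᵀ * F)⁻¹ * (Fᵀ * F) = 1 := nonsing_inv_mul _ ((isUnit_iff_isUnit_det _).mp hF)
  have hMF : residualMaker F * F = 0 := by
    rw [residualMaker, Matrix.sub_mul, Matrix.one_mul, Matrix.mul_assoc _ Fᵀ F,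
      Matrix.mul_assoc F, hFF, Matrix.mul_one, sub_self]
  conv_lhs => enter [2]; rw [residualMaker]
  rw [Matrix.mul_sub, Matrix.mul_one, ← Matrix.mul_assoc, ← Matrix.mul_assoc, hMF,
    Matrix.zero_mul, Matrix.zero_mul, sub_zero]

end residualMaker

theorem mul_smul_one_add_mul_mul_transpose_mul_transpose {M : Matrix m m R} (hMT : Mᵀ = M)
    (hMM : M * M = M) (V : Matrix m l R) {D What : Matrix l l R} {s : R} (hDT : Dᵀ = D)
    (hD : IsUnit D) (hWhat : What = Vᵀ * M * V + s • D⁻¹) (hWhatU : IsUnit What) :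
    What⁻¹ * Vᵀ * M * (s • 1 + V * D * Vᵀ) * (What⁻¹ * Vᵀ * M)ᵀ = D - s • What⁻¹ := by
  set W := Vᵀ * M * V with hW
  have hDD : D⁻¹ * D = 1 := nonsing_inv_mul _ ((isUnit_iff_isUnit_det _).mp hD)
  have hWhatWhat : What * What⁻¹ = 1 := mul_nonsing_inv _ ((isUnit_iff_isUnit_det _).mp hWhatU)
  have hWT : Wᵀ = W := by
    rw [hW, transpose_mul, transpose_mul, hMT, transpose_transpose, Matrix.mul_assoc]
  have hWhatT : Whatᵀ = What := by
    rw [hWhat, transpose_add, transpose_smul, transpose_nonsing_inv, hDT, hWT]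
  have hsandwich : Vᵀ * M * (s • 1 + V * D * Vᵀ) * (M * V) = What * (D * W) := by
    have hVMMV : Vᵀ * M * (M * V) = W := by
      rw [← Matrix.mul_assoc, Matrix.mul_assoc Vᵀ M M, hMM]
    rw [Matrix.mul_add, Matrix.add_mul, Matrix.mul_smul, Matrix.mul_one, Matrix.smul_mul, hVMMV,
      hWhat, Matrix.add_mul, Matrix.smul_mul, ← Matrix.mul_assoc D⁻¹, hDD, Matrix.one_mul]
    simp only [hW, Matrix.mul_assoc]
    abel
  calc What⁻¹ * Vᵀ * M * (s • 1 + V * D * Vᵀ) * (What⁻¹ * Vᵀ * M)ᵀ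
      = What⁻¹ * (Vᵀ * M * (s • 1 + V * D * Vᵀ) * (M * V)) * What⁻¹ := by
        rw [transpose_mul, transpose_mul, hMT, transpose_nonsing_inv, hWhatT, transpose_transpose]
        simp only [Matrix.mul_assoc]
    _ = D * (What - s • D⁻¹) * What⁻¹ := by
        rw [hsandwich, ← Matrix.mul_assoc,
          nonsing_inv_mul _ ((isUnit_iff_isUnit_det _).mp hWhatU), Matrix.one_mul, hWhat,
          add_sub_cancel_right]
    _ = D - s • What⁻¹ := by
        rw [Matrix.mul_sub, Matrix.sub_mul, Matrix.mul_assoc, hWhatWhat, Matrix.mul_one,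
          Matrix.mul_smul, mul_nonsing_inv _ ((isUnit_iff_isUnit_det _).mp hD), Matrix.smul_mul,
          Matrix.one_mul]

end Matrix

theorem stmt_2_general {n k l : ℕ}
    (F : Matrix (Fin n) (Fin k) ℝ) (V : Matrix (Fin n) (Fin l) ℝ)
    (hrank : (Matrix.fromCols F V).rank = k + l)
    (σ0 : ℝ) (hσ0 : 0 < σ0)
    (σ : Fin l → ℝ) (hσ : ∀ j, 0 < σ j)
    (D : Matrix (Fin l) (Fin l) ℝ) (hD : D = Matrix.diagonal σ)
    (Mf : Matrix (Fin n) (Fin n) ℝ) (hMf : Mf = 1 - F * (Fᵀ * F)⁻¹ * Fᵀ)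
    (W : Matrix (Fin l) (Fin l) ℝ) (hW : W = Vᵀ * Mf * V)
    (What : Matrix (Fin l) (Fin l) ℝ) (hWhat : What = W + σ0 • D⁻¹)
    (Uhat : Matrix (Fin l) (Fin l) ℝ) (hUhat : Uhat = W * D + σ0 • (1 : Matrix (Fin l) (Fin l) ℝ))
    (That : Matrix (Fin l) (Fin n) ℝ) (hThat : That = What⁻¹ * Vᵀ * Mf)
    (Sigma : Matrix (Fin n) (Fin n) ℝ)
    (hSigma : Sigma = σ0 • (1 : Matrix (Fin n) (Fin n) ℝ) + V * D * Vᵀ) :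
    That * Sigma * Thatᵀ = D - σ0 • What⁻¹ ∧
    That * Sigma * Thatᵀ = D * ((1 : Matrix (Fin l) (Fin l) ℝ) - σ0 • Uhat⁻¹) := by
  have hF : IsUnit (Fᵀ * F) := isUnit_transpose_mul_self <|
    mulVec_injective_of_fromCols (B := V) <| mulVec_injective_of_rank_eq_card (by simpa using hrank)
  have hMf' : Mf = residualMaker F := hMf
  have hMT : Mfᵀ = Mf := hMf' ▸ transpose_residualMaker F
  have hMM : Mf * Mf = Mf := hMf' ▸ residualMaker_mul_self hF
  have hDpd : D.PosDef := hD ▸ PosDef.diagonal hσ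
  have hWhat' : What = Vᵀ * Mf * V + σ0 • D⁻¹ := hW ▸ hWhat
  have hWhatU : IsUnit What :=
    hWhat' ▸ (posDef_transpose_mul_mul_add_smul_inv hMT hMM V hDpd hσ0).isUnit
  have hmain : That * Sigma * Thatᵀ = D - σ0 • What⁻¹ := by
    rw [hThat, hSigma]
    exact mul_smul_one_add_mul_mul_transpose_mul_transpose hMT hMM V
      (hD ▸ diagonal_transpose σ) hDpd.isUnit hWhat' hWhatU
  refine ⟨hmain, ?_⟩
  rw [hmain, hUhat, ← add_smul_inv_mul hDpd.isUnit, ← hWhat,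
    mul_one_sub_smul_inv_mul hDpd.isUnit]

/-- Lemma (basic properties of T̂), part (3):
`T̂ΣT̂' = D − σ₀²Ŵ⁻¹ = D(I_l − σ₀²Û⁻¹)` where `Σ = σ₀²I_n + VDV'`. -/
theorem stmt_2 {n k l : ℕ} (hn : 0 < n) (hk : 0 < k) (hl : 0 < l)
    (hnkl : k + l < n)
    (F : Matrix (Fin n) (Fin k) ℝ) (V : Matrix (Fin n) (Fin l) ℝ)
    (hrank : (Matrix.fromCols F V).rank = k + l)
    (σ0 : ℝ) (hσ0 : 0 < σ0)
    (σ : Fin l → ℝ) (hσ : ∀ j, 0 < σ j)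
    (D : Matrix (Fin l) (Fin l) ℝ) (hD : D = Matrix.diagonal σ)
    (Mf : Matrix (Fin n) (Fin n) ℝ) (hMf : Mf = 1 - F * (Fᵀ * F)⁻¹ * Fᵀ)
    (W : Matrix (Fin l) (Fin l) ℝ) (hW : W = Vᵀ * Mf * V)
    (What : Matrix (Fin l) (Fin l) ℝ) (hWhat : What = W + σ0 • D⁻¹)
    (Uhat : Matrix (Fin l) (Fin l) ℝ) (hUhat : Uhat = W * D + σ0 • (1 : Matrix (Fin l) (Fin l) ℝ))
    (That : Matrix (Fin l) (Fin n) ℝ) (hThat : That = What⁻¹ * Vᵀ * Mf)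
    (Sigma : Matrix (Fin n) (Fin n) ℝ)
    (hSigma : Sigma = σ0 • (1 : Matrix (Fin n) (Fin n) ℝ) + V * D * Vᵀ) :
    That * Sigma * Thatᵀ = D - σ0 • What⁻¹ ∧
    That * Sigma * Thatᵀ = D * ((1 : Matrix (Fin l) (Fin l) ℝ) - σ0 • Uhat⁻¹) :=
  stmt_2_general F V hrank σ0 hσ0 σ hσ D hD Mf hMf W hW What hWhat Uhat hUhat That hThat Sigma
    hSigma
end

section
/- In an orthogonal FDSLRM the following closed forms hold: M_F V = V; Û = V'M_F V·D + σ₀²I_l = diag(σ₀² + σⱼ²‖vⱼ‖²); Ŵ⁻¹ = D·Û⁻¹ = diag(ρⱼ/‖vⱼ‖²); and the j-th row of T̂ = Ŵ⁻¹V'M_F equals ρⱼ·vⱼ'/‖vⱼ‖², where ρⱼ = σⱼ²‖vⱼ‖²/(σ₀² + σⱼ²‖vⱼ‖²). -/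
/-!
Since `F'V = 0`, the projection `M_F` fixes the columns of `V`, so `V'M_F V = V'V` is the
diagonal matrix of the squared column norms. Hence `Ŵ` and `Û` are diagonal, and every claim
reduces to a scalar identity in each coordinate `j`.
-/

open Matrix

theorem sum_sq_pos_of_ne_zero {ι : Type*} [Fintype ι] {v : ι → ℝ} (hv : v ≠ 0) :
    0 < ∑ i, v i ^ 2 := by
  simpa only [dotProduct, sq] using
    lt_of_le_of_ne (Fintype.sum_nonneg fun i => mul_self_nonneg (v i))
      (Ne.symm (dotProduct_self_eq_zero.not.mpr hv))

namespace Matrix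

variable {R : Type*} [CommRing R] {m n p : Type*} [Fintype m] [Fintype n] [DecidableEq n]

theorem one_sub_mul_transpose_mul_of_transpose_mul_eq_zero
    {F : Matrix n m R} {V : Matrix n p R} (A : Matrix m m R) (hFV : Fᵀ * V = 0) :
    (1 - F * A * Fᵀ) * V = V := by
  rw [Matrix.sub_mul, Matrix.one_mul, Matrix.mul_assoc, hFV, Matrix.mul_zero, sub_zero]

theorem transpose_mul_one_sub_mul_transpose_of_transpose_mul_eq_zero
    {F : Matrix n m R} {V : Matrix n p R} (A : Matrix m m R) (hFV : Fᵀ * V = 0) :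
    Vᵀ * (1 - F * A * Fᵀ) = Vᵀ := by
  have hVF : Vᵀ * F = 0 := by
    rw [← transpose_transpose F, ← transpose_mul, hFV, transpose_zero]
  rw [Matrix.mul_sub, Matrix.mul_one, ← Matrix.mul_assoc, ← Matrix.mul_assoc, hVF,
    Matrix.zero_mul, Matrix.zero_mul, sub_zero]

theorem diagonal_mul_diagonal_add_smul_one (a s : n → R) (c : R) :
    diagonal a * diagonal s + c • (1 : Matrix n n R) = diagonal fun j => c + s j * a j := by
  rw [diagonal_mul_diagonal, ← diagonal_one, ← diagonal_smul, diagonal_add]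
  congr 1
  funext j
  simp only [Pi.smul_apply, smul_eq_mul, mul_one]
  ring

variable {K : Type*} [Field K]

theorem inv_diagonal_of_ne_zero {d : n → K} (hd : ∀ j, d j ≠ 0) :
    (diagonal d)⁻¹ = diagonal d⁻¹ :=
  inv_eq_right_inv <| by
    rw [diagonal_mul_diagonal, ← diagonal_one]
    exact congrArg diagonal (funext fun j => mul_inv_cancel₀ (hd j))

theorem inv_diagonal_add_smul_inv_diagonal {a s : n → K} {c : K}
    (hs : ∀ j, s j ≠ 0) (hden : ∀ j, c + s j * a j ≠ 0) :
    (diagonal a + c • (diagonal s)⁻¹)⁻¹ = diagonal fun j => s j / (c + s j * a j) := by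
  have hsum : diagonal a + c • (diagonal s)⁻¹ = diagonal fun j => (c + s j * a j) / s j := by
    rw [inv_diagonal_of_ne_zero hs, ← diagonal_smul, diagonal_add]
    congr 1
    funext j
    have := hs j
    simp only [Pi.smul_apply, Pi.inv_apply, smul_eq_mul]
    field_simp
    ring
  rw [hsum, inv_diagonal_of_ne_zero fun j => div_ne_zero (hden j) (hs j)]
  exact congrArg diagonal (funext fun j => inv_div _ _)

end Matrix

theorem stmt_10_general {n k l : ℕ}
    (F : Matrix (Fin n) (Fin k) ℝ)
    (V : Matrix (Fin n) (Fin l) ℝ)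
    (hcols : ∀ j : Fin l, (fun i => V i j) ≠ 0)
    (nv : Fin l → ℝ) (hnv : ∀ j, nv j = ∑ i, V i j ^ 2)
    (hFV : Fᵀ * V = 0) (hVV : Vᵀ * V = Matrix.diagonal nv)
    (σ0 : ℝ) (hσ0 : 0 < σ0)
    (σ : Fin l → ℝ) (hσ : ∀ j, 0 < σ j)
    (D : Matrix (Fin l) (Fin l) ℝ) (hD : D = Matrix.diagonal σ)
    (Mf : Matrix (Fin n) (Fin n) ℝ) (hMf : Mf = 1 - F * (Fᵀ * F)⁻¹ * Fᵀ)
    (What : Matrix (Fin l) (Fin l) ℝ) (hWhat : What = Vᵀ * Mf * V + σ0 • D⁻¹)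
    (Uhat : Matrix (Fin l) (Fin l) ℝ)
    (hUhat : Uhat = Vᵀ * Mf * V * D + σ0 • (1 : Matrix (Fin l) (Fin l) ℝ))
    (That : Matrix (Fin l) (Fin n) ℝ) (hThat : That = What⁻¹ * Vᵀ * Mf)
    (ρ : Fin l → ℝ) (hρ : ∀ j, ρ j = σ j * nv j / (σ0 + σ j * nv j)) :
    Mf * V = V ∧
    Uhat = Matrix.diagonal (fun j => σ0 + σ j * nv j) ∧
    What⁻¹ = D * Uhat⁻¹ ∧
    What⁻¹ = Matrix.diagonal (fun j => ρ j / nv j) ∧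
    (∀ j : Fin l, ∀ i : Fin n, That j i = ρ j * V i j / nv j) := by
  have hnv_pos (j : Fin l) : 0 < nv j := hnv j ▸ sum_sq_pos_of_ne_zero (hcols j)
  have hden (j : Fin l) : σ0 + σ j * nv j ≠ 0 := (add_pos hσ0 (mul_pos (hσ j) (hnv_pos j))).ne'
  have hMV : Mf * V = V := hMf ▸ one_sub_mul_transpose_mul_of_transpose_mul_eq_zero _ hFV
  have hVM : Vᵀ * Mf = Vᵀ :=
    hMf ▸ transpose_mul_one_sub_mul_transpose_of_transpose_mul_eq_zero _ hFV
  have hVMV : Vᵀ * Mf * V = diagonal nv := by rw [hVM, hVV]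
  have hU : Uhat = diagonal fun j => σ0 + σ j * nv j := by
    rw [hUhat, hVMV, hD, diagonal_mul_diagonal_add_smul_one]
  have hWinv : What⁻¹ = diagonal fun j => σ j / (σ0 + σ j * nv j) := by
    rw [hWhat, hVMV, hD, inv_diagonal_add_smul_inv_diagonal (fun j => (hσ j).ne') hden]
  refine ⟨hMV, hU, ?_, ?_, fun j i => ?_⟩
  · rw [hWinv, hU, inv_diagonal_of_ne_zero hden, hD, diagonal_mul_diagonal]
    rfl
  · rw [hWinv]
    refine congrArg diagonal (funext fun j => ?_)
    have := (hnv_pos j).ne'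
    rw [hρ j]
    field_simp
  · rw [hThat, Matrix.mul_assoc, hVM, hWinv, diagonal_mul, transpose_apply, hρ j]
    have := (hnv_pos j).ne'
    field_simp

/-- Closed forms in an orthogonal FDSLRM: `M_F V = V`,
`Û = diag(σ₀² + σⱼ²‖vⱼ‖²)`, `Ŵ⁻¹ = DÛ⁻¹ = diag(ρⱼ/‖vⱼ‖²)` and the j-th row of
`T̂` is `ρⱼ vⱼ'/‖vⱼ‖²`, where `ρⱼ = σⱼ²‖vⱼ‖²/(σ₀² + σⱼ²‖vⱼ‖²)`. -/
theorem stmt_10 {n k l : ℕ} (hn : 0 < n) (hk : 0 < k) (hl : 0 < l)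
    (hnkl : k + l < n)
    (F : Matrix (Fin n) (Fin k) ℝ) (hF : F.rank = k)
    (V : Matrix (Fin n) (Fin l) ℝ)
    (hcols : ∀ j : Fin l, (fun i => V i j) ≠ 0)
    (nv : Fin l → ℝ) (hnv : ∀ j, nv j = ∑ i, V i j ^ 2)
    (hFV : Fᵀ * V = 0) (hVV : Vᵀ * V = Matrix.diagonal nv)
    (σ0 : ℝ) (hσ0 : 0 < σ0)
    (σ : Fin l → ℝ) (hσ : ∀ j, 0 < σ j)
    (D : Matrix (Fin l) (Fin l) ℝ) (hD : D = Matrix.diagonal σ)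
    (Mf : Matrix (Fin n) (Fin n) ℝ) (hMf : Mf = 1 - F * (Fᵀ * F)⁻¹ * Fᵀ)
    (What : Matrix (Fin l) (Fin l) ℝ) (hWhat : What = Vᵀ * Mf * V + σ0 • D⁻¹)
    (Uhat : Matrix (Fin l) (Fin l) ℝ)
    (hUhat : Uhat = Vᵀ * Mf * V * D + σ0 • (1 : Matrix (Fin l) (Fin l) ℝ))
    (That : Matrix (Fin l) (Fin n) ℝ) (hThat : That = What⁻¹ * Vᵀ * Mf)
    (ρ : Fin l → ℝ) (hρ : ∀ j, ρ j = σ j * nv j / (σ0 + σ j * nv j)) :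
    Mf * V = V ∧
    Uhat = Matrix.diagonal (fun j => σ0 + σ j * nv j) ∧
    What⁻¹ = D * Uhat⁻¹ ∧
    What⁻¹ = Matrix.diagonal (fun j => ρ j / nv j) ∧
    (∀ j : Fin l, ∀ i : Fin n, That j i = ρ j * V i j / nv j) :=
  stmt_10_general F V hcols nv hnv hFV hVV σ0 hσ0 σ hσ D hD Mf hMf What hWhat Uhat hUhat That hThat
    ρ hρ
end

section
/- In an orthogonal FDSLRM, for every x ∈ ℝⁿ and every j ∈ {1,…,l}, the BLUP natural estimator equals ρⱼ² times the original natural estimator: ((T̂x)ⱼ)² = ρⱼ² · (εᵀvⱼ)²/‖vⱼ‖⁴, where ε = M_F x is the OLS residual vector and ρⱼ = σⱼ²‖vⱼ‖²/(σ₀² + σⱼ²‖vⱼ‖²); moreover (εᵀvⱼ)² = (xᵀvⱼvⱼᵀx)·1, so ((T̂x)ⱼ)² = ρⱼ²·xᵀvⱼvⱼᵀx/‖vⱼ‖⁴. -/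
open Matrix

/-!
Since `F'V = 0`, the residual maker `M_F` is invisible to `V`: `V'M_F = V'`. Hence
`Ŵ = V'V + σ₀²D⁻¹ = diag(‖vⱼ‖² + σ₀²/σⱼ²)` is diagonal and `T̂ = Ŵ⁻¹V'` rescales the `j`-th
coordinate `vⱼ'x = vⱼ'M_F x` by `(‖vⱼ‖² + σ₀²/σⱼ²)⁻¹ = ρⱼ/‖vⱼ‖²`.
-/

namespace Matrix

variable {R m n p : Type*} [Fintype m] [Fintype n]

theorem inv_diagonal_of_ne_zero_s12 [Field R] [DecidableEq m] {v : m → R} (hv : ∀ i, v i ≠ 0) :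
    (diagonal v)⁻¹ = diagonal fun i => (v i)⁻¹ :=
  inv_eq_right_inv <| by simp [hv]

theorem transpose_mul_one_sub_mul_mul_transpose [CommRing R] [DecidableEq m]
    {F : Matrix m n R} {V : Matrix m p R} (A : Matrix n n R) (h : Fᵀ * V = 0) :
    Vᵀ * (1 - F * A * Fᵀ) = Vᵀ := by
  have hVF : Vᵀ * F = 0 := by rw [← transpose_transpose F, ← transpose_mul, h, transpose_zero]
  rw [Matrix.mul_sub, Matrix.mul_one, ← Matrix.mul_assoc, ← Matrix.mul_assoc, hVF,
    Matrix.zero_mul, Matrix.zero_mul, sub_zero]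

theorem dotProduct_vecMulVec_mulVec_self [CommRing R] (v x : m → R) :
    x ⬝ᵥ vecMulVec v v *ᵥ x = (v ⬝ᵥ x) ^ 2 := by
  rw [vecMulVec_mulVec, op_smul_eq_smul, dotProduct_smul, dotProduct_comm, smul_eq_mul, sq]

end Matrix

theorem inv_add_mul_inv_eq_mul_div_add_div {R : Type*} [Field R] {ν σ c : R} (hσ : σ ≠ 0)
    (hν : ν ≠ 0) : (ν + c * σ⁻¹)⁻¹ = σ * ν / (c + σ * ν) / ν := by
  rw [mul_div_right_comm, mul_div_assoc, div_self hν, mul_one, ← inv_div]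
  congr 1
  field_simp
  ring

theorem inv_transpose_mul_residual_add_smul_inv_diagonal
    {R m n p : Type*} [Fintype m] [Fintype n] [Fintype p] [DecidableEq m] [DecidableEq p] [Field R]
    {F : Matrix m n R} {V : Matrix m p R} (A : Matrix n n R) {ν σ : p → R} (c : R)
    (hFV : Fᵀ * V = 0) (hVV : Vᵀ * V = diagonal ν) (hσ : ∀ j, σ j ≠ 0)
    (hw : ∀ j, ν j + c * (σ j)⁻¹ ≠ 0) :
    (Vᵀ * (1 - F * A * Fᵀ) * V + c • (diagonal σ)⁻¹)⁻¹ * Vᵀ * (1 - F * A * Fᵀ) =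
      diagonal (fun j => (ν j + c * (σ j)⁻¹)⁻¹) * Vᵀ := by
  rw [Matrix.mul_assoc _ Vᵀ, transpose_mul_one_sub_mul_mul_transpose A hFV, hVV,
    inv_diagonal_of_ne_zero_s12 hσ, ← diagonal_smul, diagonal_add]
  exact congrArg (· * Vᵀ) (inv_diagonal_of_ne_zero_s12 hw)

theorem stmt_12_general {n k l : ℕ}
    (F : Matrix (Fin n) (Fin k) ℝ)
    (V : Matrix (Fin n) (Fin l) ℝ)
    (hcols : ∀ j : Fin l, (fun i => V i j) ≠ 0)
    (nv : Fin l → ℝ) (hnv : ∀ j, nv j = ∑ i, V i j ^ 2)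
    (hFV : Fᵀ * V = 0) (hVV : Vᵀ * V = Matrix.diagonal nv)
    (σ0 : ℝ) (hσ0 : 0 < σ0)
    (σ : Fin l → ℝ) (hσ : ∀ j, 0 < σ j)
    (D : Matrix (Fin l) (Fin l) ℝ) (hD : D = Matrix.diagonal σ)
    (Mf : Matrix (Fin n) (Fin n) ℝ) (hMf : Mf = 1 - F * (Fᵀ * F)⁻¹ * Fᵀ)
    (What : Matrix (Fin l) (Fin l) ℝ) (hWhat : What = Vᵀ * Mf * V + σ0 • D⁻¹)
    (That : Matrix (Fin l) (Fin n) ℝ) (hThat : That = What⁻¹ * Vᵀ * Mf)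
    (ρ : Fin l → ℝ) (hρ : ∀ j, ρ j = σ j * nv j / (σ0 + σ j * nv j)) :
    ∀ x : Fin n → ℝ, ∀ j : Fin l,
      (That.mulVec x j) ^ 2 = ρ j ^ 2 * (∑ i, Mf.mulVec x i * V i j) ^ 2 / nv j ^ 2 ∧
      (∑ i, Mf.mulVec x i * V i j) ^ 2 =
        x ⬝ᵥ (Matrix.of fun a b => V a j * V b j).mulVec x ∧
      (That.mulVec x j) ^ 2 =
        ρ j ^ 2 * (x ⬝ᵥ (Matrix.of fun a b => V a j * V b j).mulVec x) / nv j ^ 2 := by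
  have hν : ∀ j, 0 < nv j := fun j => by
    obtain ⟨i, hi⟩ := Function.ne_iff.mp (hcols j)
    rw [hnv]
    exact Finset.sum_pos' (fun i _ => sq_nonneg _) ⟨i, Finset.mem_univ _, sq_pos_of_ne_zero hi⟩
  have hT : That = diagonal (fun j => (nv j + σ0 * (σ j)⁻¹)⁻¹) * Vᵀ := by
    rw [hThat, hWhat, hD, hMf]
    exact inv_transpose_mul_residual_add_smul_inv_diagonal _ _ hFV hVV (fun j => (hσ j).ne')
      fun j => (add_pos (hν j) (mul_pos hσ0 (inv_pos.mpr (hσ j)))).ne'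
  have hVMf : Vᵀ * Mf = Vᵀ := hMf ▸ transpose_mul_one_sub_mul_mul_transpose _ hFV
  intro x j
  have hε : ∑ i, (Mf *ᵥ x) i * V i j = (Vᵀ *ᵥ x) j := by
    rw [← hVMf, ← mulVec_mulVec, mulVec_transpose]
    rfl
  have hquad : x ⬝ᵥ (of fun a b => V a j * V b j) *ᵥ x = (Vᵀ *ᵥ x) j ^ 2 :=
    dotProduct_vecMulVec_mulVec_self (fun i => V i j) x
  have hTx : (That *ᵥ x) j = ρ j / nv j * (Vᵀ *ᵥ x) j := by
    rw [hT, ← mulVec_mulVec, mulVec_diagonal, hρ,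
      inv_add_mul_inv_eq_mul_div_add_div (hσ j).ne' (hν j).ne']
  rw [hε, hquad, hTx]
  exact ⟨by ring, rfl, by ring⟩

/-- In an orthogonal FDSLRM, for every `x` and every `j`, the BLUP natural
estimator equals `ρⱼ²` times the original natural estimator:
`((T̂x)ⱼ)² = ρⱼ²(ε'vⱼ)²/‖vⱼ‖⁴` with `ε = M_F x`; moreover
`(ε'vⱼ)² = x'vⱼvⱼ'x`, hence `((T̂x)ⱼ)² = ρⱼ²·x'vⱼvⱼ'x/‖vⱼ‖⁴`. -/
theorem stmt_12 {n k l : ℕ} (hn : 0 < n) (hk : 0 < k) (hl : 0 < l)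
    (hnkl : k + l < n)
    (F : Matrix (Fin n) (Fin k) ℝ) (hF : F.rank = k)
    (V : Matrix (Fin n) (Fin l) ℝ)
    (hcols : ∀ j : Fin l, (fun i => V i j) ≠ 0)
    (nv : Fin l → ℝ) (hnv : ∀ j, nv j = ∑ i, V i j ^ 2)
    (hFV : Fᵀ * V = 0) (hVV : Vᵀ * V = Matrix.diagonal nv)
    (σ0 : ℝ) (hσ0 : 0 < σ0)
    (σ : Fin l → ℝ) (hσ : ∀ j, 0 < σ j)
    (D : Matrix (Fin l) (Fin l) ℝ) (hD : D = Matrix.diagonal σ)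
    (Mf : Matrix (Fin n) (Fin n) ℝ) (hMf : Mf = 1 - F * (Fᵀ * F)⁻¹ * Fᵀ)
    (What : Matrix (Fin l) (Fin l) ℝ) (hWhat : What = Vᵀ * Mf * V + σ0 • D⁻¹)
    (That : Matrix (Fin l) (Fin n) ℝ) (hThat : That = What⁻¹ * Vᵀ * Mf)
    (ρ : Fin l → ℝ) (hρ : ∀ j, ρ j = σ j * nv j / (σ0 + σ j * nv j)) :
    ∀ x : Fin n → ℝ, ∀ j : Fin l,
      (That.mulVec x j) ^ 2 = ρ j ^ 2 * (∑ i, Mf.mulVec x i * V i j) ^ 2 / nv j ^ 2 ∧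
      (∑ i, Mf.mulVec x i * V i j) ^ 2 =
        x ⬝ᵥ (Matrix.of fun a b => V a j * V b j).mulVec x ∧
      (That.mulVec x j) ^ 2 =
        ρ j ^ 2 * (x ⬝ᵥ (Matrix.of fun a b => V a j * V b j).mulVec x) / nv j ^ 2 :=
  stmt_12_general F V hcols nv hnv hFV hVV σ0 hσ0 σ hσ D hD Mf hMf What hWhat That hThat ρ hρ
end

section
/- In an orthogonal FDSLRM, the NN-DOOLSE objective admits the quadratic-form representation: for every ν = (ν₀, ν₁,…,ν_l) ∈ ℝ^{l+1}, the squared Frobenius norm ‖εε' − Σ_ν‖² with Σ_ν = ν₀I_n + V·diag(ν₁,…,ν_l)·V' equals ν'Gν − 2q'ν + (ε'ε)², where q = (ε'ε, (ε'v₁)², …, (ε'v_l)²)' and G is the (l+1)×(l+1) matrix with G₀₀ = n, G₀ⱼ = Gⱼ₀ = ‖vⱼ‖², Gⱼⱼ = ‖vⱼ‖⁴ for j = 1,…,l, and Gᵢⱼ = 0 for distinct i, j ≥ 1. -/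
open Matrix

/-! Writing `A = εεᵀ` and `Σ_ν = ν₀ I + V diag(ν₁,…,ν_l) Vᵀ`, the objective expands as
`‖A‖² - 2 ⟨A, Σ_ν⟩ + ‖Σ_ν‖²`. Here `‖A‖² = (εᵀε)²` and
`⟨A, Σ_ν⟩ = ν₀ εᵀε + Σⱼ νⱼ (εᵀvⱼ)²` give the constant and the linear term `q'ν`. Cycling traces and
using `VᵀV = diag(‖vⱼ‖²)` turns `‖Σ_ν‖²` into `n ν₀² + 2 ν₀ Σⱼ ‖vⱼ‖² νⱼ + Σⱼ ‖vⱼ‖⁴ νⱼ²`, which is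
`ν'Gν` for the arrowhead matrix `G`. -/

namespace Matrix

variable {R m n : Type*} [CommRing R] [Fintype m]

section

variable [DecidableEq m] [DecidableEq n]

/-- The covariance matrix `Σ_ν = ν₀ I + Σⱼ νⱼ vⱼ vⱼᵀ` of a linear model with variance
components `ν₀ = c` and `(ν₁, …, ν_l) = w`. -/
def varianceComponentMatrix (c : R) (V : Matrix n m R) (w : m → R) : Matrix n n R :=
  c • 1 + V * diagonal w * Vᵀ

theorem transpose_varianceComponentMatrix (c : R) (V : Matrix n m R) (w : m → R) :
    (varianceComponentMatrix c V w)ᵀ = varianceComponentMatrix c V w := by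
  rw [varianceComponentMatrix, transpose_add, transpose_smul, transpose_one, transpose_mul,
    transpose_mul, transpose_transpose, diagonal_transpose, Matrix.mul_assoc]

end

variable [Fintype n]

theorem trace_sub_mul_transpose_sub (A B : Matrix m n R) :
    trace ((A - B) * (A - B)ᵀ) = trace (A * Aᵀ) - 2 * trace (A * Bᵀ) + trace (B * Bᵀ) := by
  have hBA : trace (B * Aᵀ) = trace (A * Bᵀ) := by
    rw [← trace_transpose, transpose_mul, transpose_transpose]
  simp only [transpose_sub, Matrix.sub_mul, Matrix.mul_sub, trace_sub, hBA]
  ring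

theorem trace_vecMulVec_mul (u v : n → R) (M : Matrix n n R) :
    trace (vecMulVec u v * M) = u ⬝ᵥ (v ᵥ* M) := by
  rw [vecMulVec_mul, trace_vecMulVec]

theorem trace_vecMulVec_self_mul_transpose (u : n → R) :
    trace (vecMulVec u u * (vecMulVec u u)ᵀ) = (u ⬝ᵥ u) ^ 2 := by
  rw [transpose_vecMulVec, trace_vecMulVec_mul, vecMul_vecMulVec, dotProduct_smul, smul_eq_mul,
    sq]

variable [DecidableEq m]

theorem vecMul_mul_diagonal_mul_transpose_dotProduct (u : n → R) (V : Matrix n m R)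
    (w : m → R) : u ᵥ* (V * diagonal w * Vᵀ) ⬝ᵥ u = ∑ a, (u ᵥ* V) a ^ 2 * w a := by
  rw [← vecMul_vecMul, ← vecMul_vecMul, ← dotProduct_mulVec, mulVec_transpose]
  simp only [dotProduct, vecMul_diagonal]
  exact Finset.sum_congr rfl fun a _ => by ring

section OrthogonalColumns

variable {V : Matrix n m R} {d : m → R}

theorem trace_mul_diagonal_mul_transpose (hV : Vᵀ * V = diagonal d) (w : m → R) :
    trace (V * diagonal w * Vᵀ) = ∑ a, d a * w a := by
  rw [trace_mul_cycle, hV, diagonal_mul_diagonal, trace_diagonal]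

theorem mul_diagonal_mul_transpose_mul_mul_diagonal_mul_transpose (hV : Vᵀ * V = diagonal d)
    (w w' : m → R) :
    V * diagonal w * Vᵀ * (V * diagonal w' * Vᵀ) = V * diagonal (w * d * w') * Vᵀ :=
  calc V * diagonal w * Vᵀ * (V * diagonal w' * Vᵀ)
      = V * diagonal w * (Vᵀ * V) * diagonal w' * Vᵀ := by simp only [Matrix.mul_assoc]
    _ = V * diagonal (w * d * w') * Vᵀ := by
      rw [hV, Matrix.mul_assoc V, diagonal_mul_diagonal, Matrix.mul_assoc V,
        diagonal_mul_diagonal]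
      rfl

end OrthogonalColumns

variable [DecidableEq n]

theorem trace_vecMulVec_mul_varianceComponentMatrix (u : n → R) (c : R) (V : Matrix n m R)
    (w : m → R) :
    trace (vecMulVec u u * varianceComponentMatrix c V w) =
      c * (u ⬝ᵥ u) + ∑ a, (u ᵥ* V) a ^ 2 * w a := by
  rw [varianceComponentMatrix, trace_vecMulVec_mul, vecMul_add, vecMul_smul, vecMul_one,
    dotProduct_add, dotProduct_smul, smul_eq_mul, dotProduct_comm u (u ᵥ* _),
    vecMul_mul_diagonal_mul_transpose_dotProduct]

section OrthogonalColumns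

variable {V : Matrix n m R} {d : m → R}

theorem trace_varianceComponentMatrix_mul_self (hV : Vᵀ * V = diagonal d) (c : R) (w : m → R) :
    trace (varianceComponentMatrix c V w * varianceComponentMatrix c V w) =
      Fintype.card n * c ^ 2 + 2 * c * ∑ a, d a * w a + ∑ a, d a ^ 2 * w a ^ 2 := by
  have hsq : ∑ a, d a * (w * d * w) a = ∑ a, d a ^ 2 * w a ^ 2 :=
    Finset.sum_congr rfl fun a _ => by simp only [Pi.mul_apply]; ring
  simp only [varianceComponentMatrix, Matrix.add_mul, Matrix.mul_add, Matrix.smul_mul,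
    Matrix.mul_smul, Matrix.one_mul, Matrix.mul_one,
    mul_diagonal_mul_transpose_mul_mul_diagonal_mul_transpose hV, trace_add, trace_smul,
    trace_one, trace_mul_diagonal_mul_transpose hV, hsq, smul_eq_mul]
  ring

theorem trace_vecMulVec_sub_varianceComponentMatrix_mul_transpose (hV : Vᵀ * V = diagonal d)
    (u : n → R) (c : R) (w : m → R) :
    trace ((vecMulVec u u - varianceComponentMatrix c V w) *
        (vecMulVec u u - varianceComponentMatrix c V w)ᵀ) =
      (u ⬝ᵥ u) ^ 2 - 2 * (c * (u ⬝ᵥ u) + ∑ a, (u ᵥ* V) a ^ 2 * w a) +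
        (Fintype.card n * c ^ 2 + 2 * c * ∑ a, d a * w a + ∑ a, d a ^ 2 * w a ^ 2) := by
  rw [trace_sub_mul_transpose_sub, trace_vecMulVec_self_mul_transpose,
    transpose_varianceComponentMatrix, trace_vecMulVec_mul_varianceComponentMatrix,
    trace_varianceComponentMatrix_mul_self hV]

end OrthogonalColumns

end Matrix

theorem Fin.dotProduct_mulVec_of_arrowhead {R : Type*} [CommRing R] {l : ℕ}
    {G : Matrix (Fin (l + 1)) (Fin (l + 1)) R} {a b : Fin l → R}
    (hG0 : ∀ j, G 0 j.succ = a j ∧ G j.succ 0 = a j) (hGdiag : ∀ j, G j.succ j.succ = b j)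
    (hGoff : ∀ i j : Fin l, i ≠ j → G i.succ j.succ = 0) (ν : Fin (l + 1) → R) :
    ν ⬝ᵥ G *ᵥ ν =
      G 0 0 * ν 0 ^ 2 + 2 * ν 0 * ∑ j, a j * ν j.succ + ∑ j, b j * ν j.succ ^ 2 := by
  have hrow : ∀ i, ∑ j : Fin l, G i.succ j.succ * ν j.succ = b i * ν i.succ := fun i => by
    rw [Finset.sum_eq_single i (fun j _ hji => by rw [hGoff i j hji.symm, zero_mul])
      (by simp), hGdiag]
  have hterm : ∀ j : Fin l, ν j.succ * (a j * ν 0 + b j * ν j.succ) =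
      ν 0 * (a j * ν j.succ) + b j * ν j.succ ^ 2 := fun j => by ring
  simp only [dotProduct, mulVec, Fin.sum_univ_succ, hrow, (hG0 _).1, (hG0 _).2]
  simp only [hterm, Finset.sum_add_distrib, ← Finset.mul_sum]
  ring

theorem stmt_14_general {n l : ℕ}
    (V : Matrix (Fin n) (Fin l) ℝ)
    (nv : Fin l → ℝ)
    (hVV : Vᵀ * V = Matrix.diagonal nv)
    (ε : Fin n → ℝ)
    (G : Matrix (Fin (l + 1)) (Fin (l + 1)) ℝ)
    (hG00 : G 0 0 = (n : ℝ))
    (hG0j : ∀ j : Fin l, G 0 j.succ = nv j ∧ G j.succ 0 = nv j)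
    (hGjj : ∀ j : Fin l, G j.succ j.succ = nv j ^ 2)
    (hGij : ∀ i j : Fin l, i ≠ j → G i.succ j.succ = 0)
    (q : Fin (l + 1) → ℝ)
    (hq0 : q 0 = ∑ i, ε i ^ 2)
    (hqj : ∀ j : Fin l, q j.succ = (∑ i, ε i * V i j) ^ 2) :
    ∀ ν : Fin (l + 1) → ℝ,
      Matrix.trace
        ((Matrix.vecMulVec ε ε -
            (ν 0 • (1 : Matrix (Fin n) (Fin n) ℝ) +
              (V * Matrix.diagonal (fun j => ν j.succ) : Matrix (Fin n) (Fin l) ℝ) * Vᵀ)) *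
         (Matrix.vecMulVec ε ε -
            (ν 0 • (1 : Matrix (Fin n) (Fin n) ℝ) +
              (V * Matrix.diagonal (fun j => ν j.succ) : Matrix (Fin n) (Fin l) ℝ) * Vᵀ))ᵀ)
        = ν ⬝ᵥ G.mulVec ν - 2 * (q ⬝ᵥ ν) + (∑ i, ε i ^ 2) ^ 2 := by
  intro ν
  -- The ascription in the statement elaborates `V * diagonal _` with the definitionally equal
  -- `CStarMatrix` multiplication, so the expansion is applied by unification, not by `rw`.
  refine (trace_vecMulVec_sub_varianceComponentMatrix_mul_transpose hVV ε (ν 0)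
    (fun j => ν j.succ)).trans ?_
  have hεε : ε ⬝ᵥ ε = ∑ i, ε i ^ 2 := by simp only [dotProduct, sq]
  have hεV : ∀ j, (ε ᵥ* V) j = ∑ i, ε i * V i j := fun _ => rfl
  have hqν : q ⬝ᵥ ν = q 0 * ν 0 + ∑ j : Fin l, q j.succ * ν j.succ := Fin.sum_univ_succ _
  rw [Fin.dotProduct_mulVec_of_arrowhead hG0j hGjj hGij, hqν]
  simp only [hG00, hq0, hqj, hεε, hεV, Fintype.card_fin]
  ring

/-- Quadratic-form representation of the NN-DOOLSE objective in an orthogonal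
FDSLRM: `‖εε' − Σ_ν‖² = ν'Gν − 2q'ν + (ε'ε)²` (Frobenius norm, i.e. the trace
inner product), where `Σ_ν = ν₀I_n + V diag(ν₁,…,ν_l) V'`,
`q = (ε'ε, (ε'v₁)², …, (ε'v_l)²)'` and `G` is the Gram matrix with
`G₀₀ = n`, `G₀ⱼ = Gⱼ₀ = ‖vⱼ‖²`, `Gⱼⱼ = ‖vⱼ‖⁴` and zeros elsewhere. -/
theorem stmt_14 {n k l : ℕ} (hn : 0 < n) (hk : 0 < k) (hl : 0 < l)
    (hnkl : k + l < n)
    (F : Matrix (Fin n) (Fin k) ℝ) (hF : F.rank = k)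
    (V : Matrix (Fin n) (Fin l) ℝ)
    (hcols : ∀ j : Fin l, (fun i => V i j) ≠ 0)
    (nv : Fin l → ℝ) (hnv : ∀ j, nv j = ∑ i, V i j ^ 2)
    (hFV : Fᵀ * V = 0) (hVV : Vᵀ * V = Matrix.diagonal nv)
    (Mf : Matrix (Fin n) (Fin n) ℝ) (hMf : Mf = 1 - F * (Fᵀ * F)⁻¹ * Fᵀ)
    (x : Fin n → ℝ) (ε : Fin n → ℝ) (hε : ε = Mf.mulVec x)
    (G : Matrix (Fin (l + 1)) (Fin (l + 1)) ℝ)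
    (hG00 : G 0 0 = (n : ℝ))
    (hG0j : ∀ j : Fin l, G 0 j.succ = nv j ∧ G j.succ 0 = nv j)
    (hGjj : ∀ j : Fin l, G j.succ j.succ = nv j ^ 2)
    (hGij : ∀ i j : Fin l, i ≠ j → G i.succ j.succ = 0)
    (q : Fin (l + 1) → ℝ)
    (hq0 : q 0 = ∑ i, ε i ^ 2)
    (hqj : ∀ j : Fin l, q j.succ = (∑ i, ε i * V i j) ^ 2) :
    ∀ ν : Fin (l + 1) → ℝ,
      Matrix.trace
        ((Matrix.vecMulVec ε ε -
            (ν 0 • (1 : Matrix (Fin n) (Fin n) ℝ) +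
              (V * Matrix.diagonal (fun j => ν j.succ) : Matrix (Fin n) (Fin l) ℝ) * Vᵀ)) *
         (Matrix.vecMulVec ε ε -
            (ν 0 • (1 : Matrix (Fin n) (Fin n) ℝ) +
              (V * Matrix.diagonal (fun j => ν j.succ) : Matrix (Fin n) (Fin l) ℝ) * Vᵀ))ᵀ)
        = ν ⬝ᵥ G.mulVec ν - 2 * (q ⬝ᵥ ν) + (∑ i, ε i ^ 2) ^ 2 :=
  stmt_14_general V nv hVV ε G hG00 hG0j hGjj hGij q hq0 hqj
end

section
/- Let v₁,…,v_l be nonzero vectors in ℝⁿ and let n* be a real number with n* > l. Then the (l+1)×(l+1) matrix G with entries G₀₀ = n*, G₀ⱼ = Gⱼ₀ = ‖vⱼ‖², Gⱼⱼ = ‖vⱼ‖⁴ for j = 1,…,l, and Gᵢⱼ = 0 for distinct i, j ≥ 1, is symmetric positive definite. -/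
/-!
Writing `a j = ‖v j‖²`, the quadratic form of `G` is the sum of squares
`xᵀ G x = (n* - l) x₀² + ∑ⱼ (a j xⱼ + x₀)²`,
which is positive for `x ≠ 0`: the first term when `x₀ ≠ 0`, and otherwise the term
of some `j` with `xⱼ ≠ 0`, since every `a j` is nonzero.
-/

open Matrix

namespace Matrix

variable {R : Type*} {l : ℕ}

/-- The arrowhead matrix with corner `c`, first row and column `a` and diagonal `a j ^ 2`. -/
def arrow [Zero R] [Pow R ℕ] (c : R) (a : Fin l → R) : Matrix (Fin (l + 1)) (Fin (l + 1)) R :=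
  of <| Fin.cases (Fin.cons c a) fun i => Fin.cons (a i) (Pi.single i (a i ^ 2))

section CommRing

variable [CommRing R] (c : R) (a : Fin l → R)

theorem arrow_isSymm : (arrow c a).IsSymm := by
  ext i j
  induction i using Fin.cases <;> induction j using Fin.cases
  case succ.succ i j => by_cases h : i = j <;> simp [arrow, h, eq_comm]
  all_goals simp [arrow]

theorem dotProduct_arrow_mulVec (x : Fin (l + 1) → R) :
    x ⬝ᵥ (arrow c a *ᵥ x) = (c - l) * x 0 ^ 2 + ∑ j, (a j * x j.succ + x 0) ^ 2 := by
  have expand (j : Fin l) : (a j * x j.succ + x 0) ^ 2 =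
      x j.succ * (a j * x 0 + a j ^ 2 * x j.succ) + x 0 * (a j * x j.succ) + x 0 ^ 2 := by
    ring
  simp only [expand, Finset.sum_add_distrib, ← Finset.mul_sum, Finset.sum_const,
    Finset.card_univ, Fintype.card_fin, nsmul_eq_mul]
  simp only [dotProduct, mulVec, arrow, of_apply, Fin.sum_univ_succ, Fin.cases_zero,
    Fin.cons_zero, Fin.cons_succ, Fin.cases_succ, Pi.single_apply, ite_mul, zero_mul,
    Finset.sum_ite_eq', Finset.mem_univ, ↓reduceIte]
  ring

end CommRing

theorem arrow_posDef {c : ℝ} {a : Fin l → ℝ} (hc : l < c) (ha : ∀ j, a j ≠ 0) :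
    (arrow c a).PosDef := by
  refine PosDef.of_dotProduct_mulVec_pos (isHermitian_iff_isSymm.2 (arrow_isSymm c a))
    fun x hx => ?_
  rw [star_trivial, dotProduct_arrow_mulVec]
  rcases eq_or_ne (x 0) 0 with hx0 | hx0
  · obtain ⟨j, hj⟩ : ∃ j : Fin l, x j.succ ≠ 0 := by
      by_contra! h
      exact hx (funext fun i => Fin.cases hx0 h i)
    have hterm : 0 < (a j * x j.succ + x 0) ^ 2 := by
      rw [hx0, add_zero]
      exact sq_pos_of_ne_zero (mul_ne_zero (ha j) hj)
    have hsum_pos : 0 < ∑ i, (a i * x i.succ + x 0) ^ 2 :=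
      Finset.sum_pos' (fun i _ => sq_nonneg _) ⟨j, Finset.mem_univ j, hterm⟩
    simpa [hx0] using hsum_pos
  · have hsum : 0 ≤ ∑ j, (a j * x j.succ + x 0) ^ 2 := Finset.sum_nonneg fun j _ => sq_nonneg _
    have hcorner := mul_pos (sub_pos.2 hc) (sq_pos_of_ne_zero hx0)
    linarith

end Matrix

/-- Positive definiteness of the Gram matrix `G` of the NN-(M)DOOLSE problem:
if `v₁,…,v_l ∈ ℝⁿ` are nonzero and `n* > l`, then the `(l+1)×(l+1)` matrix
with `G₀₀ = n*`, `G₀ⱼ = Gⱼ₀ = ‖vⱼ‖²`, `Gⱼⱼ = ‖vⱼ‖⁴` and zeros elsewhere is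
symmetric positive definite. -/
theorem stmt_15 {n l : ℕ}
    (v : Fin l → (Fin n → ℝ)) (hv : ∀ j, v j ≠ 0)
    (nv : Fin l → ℝ) (hnv : ∀ j, nv j = ∑ i, v j i ^ 2)
    (nstar : ℝ) (hnstar : (l : ℝ) < nstar)
    (G : Matrix (Fin (l + 1)) (Fin (l + 1)) ℝ)
    (hG00 : G 0 0 = nstar)
    (hG0j : ∀ j : Fin l, G 0 j.succ = nv j ∧ G j.succ 0 = nv j)
    (hGjj : ∀ j : Fin l, G j.succ j.succ = nv j ^ 2)
    (hGij : ∀ i j : Fin l, i ≠ j → G i.succ j.succ = 0) :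
    G.IsSymm ∧ G.PosDef := by
  have hG : G = arrow nstar nv := by
    ext i j
    induction i using Fin.cases <;> induction j using Fin.cases
    case zero.zero => simp [arrow, hG00]
    case zero.succ j => simp [arrow, (hG0j j).1]
    case succ.zero i => simp [arrow, (hG0j i).2]
    case succ.succ i j =>
      by_cases h : i = j
      · subst h; simp [arrow, hGjj]
      · simp [arrow, hGij i j h, h]
  have hnv_ne (j : Fin l) : nv j ≠ 0 := by
    rw [hnv]
    simpa [dotProduct, ← sq] using mt dotProduct_self_eq_zero.1 (hv j)
  exact hG ▸ ⟨arrow_isSymm nstar nv, arrow_posDef hnstar hnv_ne⟩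
end

section
/- In an orthogonal FDSLRM, let ν̂ be the unique minimizer over [0,∞)^{l+1} of f₀(ν) = ν'Gν − 2q'ν, where G has entries G₀₀ = n* (with n* = n or n* = n − k, in either case n* > l), G₀ⱼ = Gⱼ₀ = ‖vⱼ‖², Gⱼⱼ = ‖vⱼ‖⁴, zeros elsewhere, and q = (ε'ε, (ε'v₁)², …, (ε'v_l)²)'. Then ν̂₀ = 0 if and only if ε lies in the linear span of v₁,…,v_l. -/
open Matrix

/-- In an orthogonal FDSLRM, the unique NN-(M)DOOLSE minimizer `ν̂` over the
nonnegative orthant of `f₀(ν) = ν'Gν − 2q'ν` has `ν̂₀ = 0` iff the OLS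
residual `ε = M_F x` lies in the span of the columns `v₁,…,v_l` of `V`. -/
theorem stmt_18 {n k l : ℕ} (hn : 0 < n) (hk : 0 < k) (hl : 0 < l)
    (hnkl : k + l < n)
    (F : Matrix (Fin n) (Fin k) ℝ) (hF : F.rank = k)
    (V : Matrix (Fin n) (Fin l) ℝ)
    (hcols : ∀ j : Fin l, (fun i => V i j) ≠ 0)
    (nv : Fin l → ℝ) (hnv : ∀ j, nv j = ∑ i, V i j ^ 2)
    (hFV : Fᵀ * V = 0) (hVV : Vᵀ * V = Matrix.diagonal nv)
    (Mf : Matrix (Fin n) (Fin n) ℝ) (hMf : Mf = 1 - F * (Fᵀ * F)⁻¹ * Fᵀ)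
    (x : Fin n → ℝ) (ε : Fin n → ℝ) (hε : ε = Mf.mulVec x)
    (nstar : ℝ) (hnstar' : nstar = (n : ℝ) ∨ nstar = (n : ℝ) - (k : ℝ))
    (hnstar : (l : ℝ) < nstar)
    (G : Matrix (Fin (l + 1)) (Fin (l + 1)) ℝ)
    (hG00 : G 0 0 = nstar)
    (hG0j : ∀ j : Fin l, G 0 j.succ = nv j ∧ G j.succ 0 = nv j)
    (hGjj : ∀ j : Fin l, G j.succ j.succ = nv j ^ 2)
    (hGij : ∀ i j : Fin l, i ≠ j → G i.succ j.succ = 0)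
    (q : Fin (l + 1) → ℝ)
    (hq0 : q 0 = ∑ i, ε i ^ 2)
    (hqj : ∀ j : Fin l, q j.succ = (∑ i, ε i * V i j) ^ 2)
    (f0 : (Fin (l + 1) → ℝ) → ℝ)
    (hf0 : ∀ ν, f0 ν = ν ⬝ᵥ G.mulVec ν - 2 * (q ⬝ᵥ ν))
    (νhat : Fin (l + 1) → ℝ) (hνhat : ∀ j, 0 ≤ νhat j)
    (hmin : ∀ ν : Fin (l + 1) → ℝ, (∀ j, 0 ≤ ν j) → f0 νhat ≤ f0 ν) :
    νhat 0 = 0 ↔ ε ∈ Submodule.span ℝ (Set.range fun j : Fin l => fun i => V i j) := by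
  classical
  set e : Fin l → ℝ := fun j => ∑ i, ε i * V i j with he
  have hnvpos : ∀ j, 0 < nv j := by
    intro j
    rw [hnv]
    rcases (Finset.sum_nonneg (fun i _ => sq_nonneg (V i j)) : (0:ℝ) ≤ ∑ i, V i j ^ 2).lt_or_eq with h | h
    · exact h
    · exfalso
      apply hcols j
      funext i
      have := (Finset.sum_eq_zero_iff_of_nonneg (fun i _ => sq_nonneg (V i j))).1 h.symm i (Finset.mem_univ i)
      exact pow_eq_zero_iff (two_ne_zero) |>.1 this
  have horth : ∀ j j' : Fin l, (∑ i, V i j * V i j') = if j = j' then nv j else 0 := by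
    intro j j'
    have h := congrFun (congrFun hVV j) j'
    simpa [Matrix.mul_apply, Matrix.transpose_apply, Matrix.diagonal_apply] using h
  set d : Fin l → ℝ := fun j => e j / nv j with hd
  set c : Fin l → ℝ := fun j => d j * e j with hc
  have hdnv : ∀ j, d j * nv j = e j := by
    intro j; simp only [hd]; exact div_mul_cancel₀ _ (hnvpos j).ne'
  have hcnn : ∀ j, 0 ≤ c j := by
    intro j
    have h1 : c j = e j * e j / nv j := by simp only [hc, hd]; ring
    rw [h1]
    exact div_nonneg (mul_self_nonneg _) (hnvpos j).le
  have hqs : ∀ j, q j.succ = c j * nv j := by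
    intro j
    rw [hqj j]
    have h1 : c j * nv j = e j * e j := by
      simp only [hc]; rw [mul_comm (d j) (e j), mul_assoc, hdnv j]
    rw [h1, ← pow_two]
  set w : Fin n → ℝ := fun i => ε i - ∑ j, d j * V i j with hw
  have hwv : ∀ j, (∑ i, w i * V i j) = 0 := by
    intro j
    have h1 : (∑ i, w i * V i j) = e j - ∑ j', d j' * ∑ i, V i j' * V i j := by
      calc (∑ i, w i * V i j)
          = ∑ i, (ε i * V i j - ∑ j', d j' * V i j' * V i j) := by
            refine Finset.sum_congr rfl fun i _ => ?_
            simp only [hw]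
            rw [sub_mul, Finset.sum_mul]
        _ = (∑ i, ε i * V i j) - ∑ i, ∑ j', d j' * V i j' * V i j := by
            rw [Finset.sum_sub_distrib]
        _ = e j - ∑ j', ∑ i, d j' * V i j' * V i j := by rw [Finset.sum_comm]
        _ = e j - ∑ j', d j' * ∑ i, V i j' * V i j := by
            congr 1
            refine Finset.sum_congr rfl fun j' _ => ?_
            rw [Finset.mul_sum]
            exact Finset.sum_congr rfl fun i _ => by ring
    rw [h1]
    have h2 : (∑ j', d j' * ∑ i, V i j' * V i j) = d j * nv j := by
      rw [Finset.sum_eq_single j]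
      · rw [horth]; simp
      · intro b _ hb
        rw [horth]
        simp [hb]
      · simp
    rw [h2, hdnv j, sub_self]
  have hei : ∀ i, ε i = w i + ∑ j, d j * V i j := by intro i; simp only [hw]; ring
  have hbessel : (∑ i, ε i ^ 2) = (∑ i, w i ^ 2) + ∑ j, c j := by
    have hsplit : (∑ i, ε i ^ 2)
        = (∑ i, (w i ^ 2 + 2 * (w i * ∑ j, d j * V i j)
            + (∑ j, d j * V i j) * (∑ j', d j' * V i j'))) := by
      refine Finset.sum_congr rfl fun i _ => ?_
      rw [hei i]; ring
    rw [hsplit, Finset.sum_add_distrib, Finset.sum_add_distrib]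
    have h2 : (∑ i, 2 * (w i * ∑ j, d j * V i j)) = 0 := by
      have h2a : ∀ i, 2 * (w i * ∑ j, d j * V i j) = ∑ j, 2 * d j * (w i * V i j) := by
        intro i
        rw [Finset.mul_sum, Finset.mul_sum]
        exact Finset.sum_congr rfl fun j _ => by ring
      rw [Finset.sum_congr rfl fun i _ => h2a i, Finset.sum_comm]
      refine Finset.sum_eq_zero fun j _ => ?_
      rw [← Finset.mul_sum, hwv j, mul_zero]
    have h3 : (∑ i, (∑ j, d j * V i j) * (∑ j', d j' * V i j')) = ∑ j, c j := by
      have step1 : ∀ i : Fin n, (∑ j, d j * V i j) * (∑ j', d j' * V i j')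
          = ∑ j, ∑ j', (d j * V i j) * (d j' * V i j') := by
        intro i; exact Finset.sum_mul_sum _ _ _ _
      rw [Finset.sum_congr rfl fun i _ => step1 i, Finset.sum_comm]
      refine Finset.sum_congr rfl fun j _ => ?_
      rw [Finset.sum_comm]
      have h3a : ∀ j' : Fin l, (∑ i, (d j * V i j) * (d j' * V i j'))
          = (d j * d j') * ∑ i, V i j * V i j' := by
        intro j'
        rw [Finset.mul_sum]
        exact Finset.sum_congr rfl fun i _ => by ring
      rw [Finset.sum_congr rfl fun j' _ => h3a j']
      rw [Finset.sum_eq_single j]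
      · rw [horth]
        simp only [eq_self_iff_true, if_true]
        rw [mul_assoc, hdnv j]
      · intro b _ hb
        rw [horth]
        simp [Ne.symm hb]
      · simp
    rw [h2, h3, add_zero]
  set B : ℝ := ∑ i, w i ^ 2 with hB
  have hBnn : 0 ≤ B := Finset.sum_nonneg fun i _ => sq_nonneg _
  have hqB : q 0 = B + ∑ j, c j := by rw [hq0, hbessel]
  have hnspos : 0 < nstar := lt_of_le_of_lt (Nat.cast_nonneg l) hnstar
  -- expansion of the quadratic form
  have hQ : ∀ ν : Fin (l+1) → ℝ, ν ⬝ᵥ G.mulVec ν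
      = nstar * ν 0 ^ 2 + 2 * (∑ j, nv j * ν 0 * ν j.succ) + ∑ j, nv j ^ 2 * ν j.succ ^ 2 := by
    intro ν
    have hrow0 : (G.mulVec ν) 0 = nstar * ν 0 + ∑ j, nv j * ν j.succ := by
      simp only [Matrix.mulVec, dotProduct]
      rw [Fin.sum_univ_succ, hG00]
      congr 1
      exact Finset.sum_congr rfl fun j _ => by rw [(hG0j j).1]
    have hrowj : ∀ j : Fin l, (G.mulVec ν) j.succ = nv j * ν 0 + nv j ^ 2 * ν j.succ := by
      intro j
      simp only [Matrix.mulVec, dotProduct]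
      rw [Fin.sum_univ_succ, (hG0j j).2]
      congr 1
      rw [Finset.sum_eq_single j]
      · rw [hGjj j]
      · intro b _ hb
        rw [hGij j b (Ne.symm hb), zero_mul]
      · simp
    show (∑ a, ν a * (G.mulVec ν) a) = _
    rw [Fin.sum_univ_succ, hrow0]
    have hs : (∑ j : Fin l, ν j.succ * (G.mulVec ν) j.succ)
        = ∑ j, (nv j * ν 0 * ν j.succ + nv j ^ 2 * ν j.succ ^ 2) := by
      refine Finset.sum_congr rfl fun j _ => ?_
      rw [hrowj j]; ring
    rw [hs, Finset.sum_add_distrib]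
    have hms : ν 0 * (nstar * ν 0 + ∑ j, nv j * ν j.succ)
        = nstar * ν 0 ^ 2 + ∑ j, nv j * ν 0 * ν j.succ := by
      rw [mul_add, Finset.mul_sum]
      congr 1
      · ring
      · exact Finset.sum_congr rfl fun j _ => by ring
    rw [hms]
    ring
  have hq' : ∀ ν : Fin (l+1) → ℝ, q ⬝ᵥ ν = q 0 * ν 0 + ∑ j, c j * nv j * ν j.succ := by
    intro ν
    show (∑ a, q a * ν a) = _
    rw [Fin.sum_univ_succ]
    congr 1
    refine Finset.sum_congr rfl fun j _ => ?_
    rw [hqs j]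
  -- completed-square sum identity
  have hsum' : ∀ ν : Fin (l+1) → ℝ,
      (∑ j, (nv j * ν j.succ + ν 0 - c j) ^ 2)
      = 2 * (∑ j, nv j * ν 0 * ν j.succ) + (∑ j, nv j ^ 2 * ν j.succ ^ 2)
        - 2 * (∑ j, c j * nv j * ν j.succ) + (l : ℝ) * ν 0 ^ 2
        - 2 * (∑ j, c j) * ν 0 + ∑ j, c j ^ 2 := by
    intro ν
    have e1 : (l : ℝ) * ν 0 ^ 2 = ∑ _j : Fin l, ν 0 ^ 2 := by
      simp [Finset.sum_const, mul_comm]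
    rw [e1, Finset.mul_sum, Finset.mul_sum, Finset.mul_sum, Finset.sum_mul]
    rw [← Finset.sum_add_distrib, ← Finset.sum_sub_distrib, ← Finset.sum_add_distrib,
        ← Finset.sum_sub_distrib, ← Finset.sum_add_distrib]
    exact Finset.sum_congr rfl fun j _ => by ring
  have hkey : ∀ ν : Fin (l+1) → ℝ,
      f0 ν = (nstar - l) * ν 0 ^ 2 - 2 * B * ν 0 - (∑ j, c j ^ 2)
        + ∑ j, (nv j * ν j.succ + ν 0 - c j) ^ 2 := by
    intro ν
    rw [hf0 ν, hQ ν, hq' ν, hqB, hsum' ν]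
    ring
  have hlow : ∀ ν : Fin (l+1) → ℝ,
      (nstar - l) * ν 0 ^ 2 - 2 * B * ν 0 - (∑ j, c j ^ 2) ≤ f0 ν := by
    intro ν
    rw [hkey ν]
    have := Finset.sum_nonneg (fun j (_ : j ∈ Finset.univ) =>
      sq_nonneg (nv j * ν j.succ + ν 0 - c j))
    linarith
  have hup : ∀ t : ℝ, 0 ≤ t → f0 νhat ≤ nstar * t ^ 2 - 2 * B * t - (∑ j, c j ^ 2) := by
    intro t ht
    set νt : Fin (l+1) → ℝ := Fin.cases t (fun j => max ((c j - t) / nv j) 0) with hνt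
    have hνt0 : νt 0 = t := rfl
    have hνts : ∀ j : Fin l, νt j.succ = max ((c j - t) / nv j) 0 := fun j => by
      simp [hνt]
    have hnn : ∀ a, 0 ≤ νt a := by
      intro a
      refine Fin.cases ?_ ?_ a
      · simpa [hνt0] using ht
      · intro j; rw [hνts j]; exact le_max_right _ _
    have hterm : ∀ j : Fin l, (nv j * νt j.succ + νt 0 - c j) ^ 2 ≤ t ^ 2 := by
      intro j
      rw [hνts j, hνt0]
      rcases le_total t (c j) with h | h
      · rw [max_eq_left (div_nonneg (by linarith) (hnvpos j).le)]
        rw [mul_comm, div_mul_cancel₀ _ (hnvpos j).ne']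
        have hz : c j - t + t - c j = 0 := by ring
        rw [hz]
        simpa using sq_nonneg t
      · rw [max_eq_right (div_nonpos_of_nonpos_of_nonneg (by linarith) (hnvpos j).le)]
        have h0 : 0 ≤ c j := hcnn j
        nlinarith
    have h1' := hmin νt hnn
    rw [hkey νt, hνt0] at h1'
    have hs : (∑ j, (nv j * νt j.succ + t - c j) ^ 2) ≤ (l : ℝ) * t ^ 2 := by
      have hconst : (∑ _j : Fin l, t ^ 2) = (l : ℝ) * t ^ 2 := by
        simp [Finset.sum_const, mul_comm]
      rw [← hconst]
      refine Finset.sum_le_sum fun j _ => ?_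
      have := hterm j
      rwa [hνt0] at this
    nlinarith [hs, h1']
  constructor
  · -- νhat 0 = 0 → ε ∈ span
    intro h0
    have hB0 : B = 0 := by
      have hlow' := hlow νhat
      rw [h0] at hlow'
      have hup' := hup (B / nstar) (div_nonneg hBnn hnspos.le)
      have hid : nstar * (B / nstar) ^ 2 - 2 * B * (B / nstar) = -(B ^ 2 / nstar) := by
        field_simp
        ring
      have hle : B ^ 2 / nstar ≤ 0 := by nlinarith
      have hle2 : B ^ 2 ≤ 0 := by
        by_contra hcon
        push_neg at hcon
        have := div_pos hcon hnspos
        linarith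
      have : B ^ 2 = 0 := le_antisymm hle2 (sq_nonneg B)
      have := pow_eq_zero_iff (two_ne_zero) |>.1 this
      exact this
    have hwz : ∀ i, w i = 0 := by
      intro i
      have hs := (Finset.sum_eq_zero_iff_of_nonneg
        (fun i (_ : i ∈ Finset.univ) => sq_nonneg (w i))).1 hB0 i (Finset.mem_univ i)
      exact pow_eq_zero_iff (two_ne_zero) |>.1 hs
    refine (Submodule.mem_span_range_iff_exists_fun ℝ).2 ⟨d, ?_⟩
    funext i
    have hwi := hwz i
    simp only [hw] at hwi
    have : ε i = ∑ j, d j * V i j := by linarith [hwi]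
    simp only [Finset.sum_apply, Pi.smul_apply, smul_eq_mul]
    linarith [hwi]
  · -- ε ∈ span → νhat 0 = 0
    intro hmem
    obtain ⟨a, ha⟩ := (Submodule.mem_span_range_iff_exists_fun ℝ).1 hmem
    have hεi : ∀ i, ε i = ∑ j, a j * V i j := by
      intro i
      rw [← ha]
      simp [Finset.sum_apply]
    have hea : ∀ j, e j = a j * nv j := by
      intro j
      show (∑ i, ε i * V i j) = a j * nv j
      calc (∑ i, ε i * V i j) = ∑ i, ∑ kk, a kk * V i kk * V i j := by
            refine Finset.sum_congr rfl fun i _ => ?_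
            rw [hεi i, Finset.sum_mul]
        _ = ∑ kk, a kk * ∑ i, V i kk * V i j := by
            rw [Finset.sum_comm]
            refine Finset.sum_congr rfl fun kk _ => ?_
            rw [Finset.mul_sum]
            exact Finset.sum_congr rfl fun i _ => by ring
        _ = a j * nv j := by
            rw [Finset.sum_eq_single j]
            · rw [horth]; simp
            · intro b _ hb; rw [horth]; simp [hb]
            · simp
    have hdaj : ∀ j, d j = a j := by
      intro j
      simp only [hd]
      rw [hea j, mul_div_cancel_right₀ _ (hnvpos j).ne']
    have hB0 : B = 0 := by
      rw [hB]
      refine Finset.sum_eq_zero fun i _ => ?_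
      have hwi : w i = 0 := by
        simp only [hw]
        rw [hεi i, sub_eq_zero]
        exact Finset.sum_congr rfl fun j _ => by rw [hdaj j]
      rw [hwi]
      simp
    have hup0 := hup 0 le_rfl
    norm_num at hup0
    have hlow0 := hlow νhat
    rw [hB0] at hlow0
    have hpos : 0 < nstar - l := by linarith only [hnstar]
    have h1 : (nstar - l) * νhat 0 ^ 2 ≤ 0 := by linarith only [hup0, hlow0]
    have h2 : 0 ≤ (nstar - l) * νhat 0 ^ 2 := mul_nonneg hpos.le (sq_nonneg _)
    have h3 : (nstar - l) * νhat 0 ^ 2 = 0 := le_antisymm h1 h2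
    have hx2 : νhat 0 ^ 2 = 0 := by
      rcases mul_eq_zero.1 h3 with h | h
      · exact absurd h hpos.ne'
      · exact h
    exact pow_eq_zero_iff (two_ne_zero) |>.1 hx2
end

section
/- (Equivalence of NN-(M)DOOLSE and (RE)MLE.) In an orthogonal FDSLRM assume ε ∉ span{v₁,…,v_l} and n* > l (n* = n for MLE/DOOLSE, n* = n − k for REMLE/MDOOLSE). Let ν̂ be the unique minimizer over [0,∞)^{l+1} of the NN-(M)DOOLSE objective f₀(ν) = ν'Gν − 2q'ν (G and q as below); then ν̂₀ > 0. Define the bijective transformation d₀ = 1/ν₀, dⱼ = νⱼ/(ν₀(ν₀ + ‖vⱼ‖²νⱼ)) for j = 1,…,l. Then a vector ν ∈ [0,∞)^{l+1} with ν₀ > 0 minimizes f₀ over [0,∞)^{l+1} if and only if its image d = (d₀,…,d_l) minimizes the equivalent (RE)MLE convex objective g(d) = −(n* − l)·log d₀ − ∑_{j=1}^{l} log(d₀ − dⱼ‖vⱼ‖²) + d₀·ε'ε − ∑_{j=1}^{l} dⱼ·(ε'vⱼ)² over the set {d : dⱼ ≥ 0 for all j ≥ 1 and d₀ > dⱼ‖vⱼ‖²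 for all j}. In particular, non-negative (M)DOOLSE coincide with (RE)MLE in a Gaussian orthogonal FDSLRM whenever ε ∉ span{v₁,…,v_l} (an event of probability 1). -/
/-!
Both problems are governed by their Karush–Kuhn–Tucker conditions. A minimiser of the quadratic
`f₀` on the orthant satisfies them; at `ν₀ = 0` they would force
`ε'ε ≤ ∑ⱼ (ε'vⱼ)² / ‖vⱼ‖²`, contradicting the strict Bessel inequality for `ε ∉ span{vⱼ}`.
For `ν₀ > 0` the transformation satisfies `d₀ - dⱼ‖vⱼ‖² = 1 / (ν₀ + ‖vⱼ‖²νⱼ)`, and this carries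
the KKT conditions of `f₀` at `ν` exactly onto those of `g` at `d`. Relative to a KKT point `d`,
the excess `g d' - g d` is a sum of Itakura–Saito divergences and complementary-slackness terms,
all nonnegative and all zero only at `d' = d`. Hence images of KKT points are the unique
minimiser of `g`; conversely a minimiser of `g` is the image of `ν̂`, so `ν = ν̂` by injectivity.
-/

open Matrix Filter Topology Finset Real

lemma nonneg_of_forall_mem_Ioc_mul_nonneg {ρ C A : ℝ} (hρ : 0 < ρ)
    (h : ∀ t ∈ Set.Ioc 0 ρ, 0 ≤ t * (C * t + A)) : 0 ≤ A := by
  have hlim : Tendsto (fun t => C * t + A) (𝓝[>] 0) (𝓝 A) := by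
    have : Continuous fun t : ℝ => C * t + A := by fun_prop
    simpa using this.continuousWithinAt (s := Set.Ioi 0) (x := 0) |>.tendsto
  refine ge_of_tendsto hlim ?_
  filter_upwards [Ioc_mem_nhdsGT hρ] with t ht
  exact nonneg_of_mul_nonneg_right (h t ht) ht.1

lemma nonneg_and_mul_eq_zero_of_forall_add_nonneg {x C A : ℝ} (hx : 0 ≤ x)
    (h : ∀ t, 0 ≤ x + t → 0 ≤ t * (C * t + A)) : 0 ≤ A ∧ x * A = 0 := by
  have hA : 0 ≤ A :=
    nonneg_of_forall_mem_Ioc_mul_nonneg one_pos fun t ht => h t (by linarith [ht.1])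
  refine ⟨hA, ?_⟩
  rcases hx.eq_or_lt with rfl | hx_pos
  · exact zero_mul A
  have hA' : 0 ≤ -A := nonneg_of_forall_mem_Ioc_mul_nonneg (C := C) hx_pos fun t ht => by
    linarith [h (-t) (by linarith [ht.2])]
  rw [le_antisymm (neg_nonneg.1 hA') hA, mul_zero]

section QuadraticProgram

variable {ι : Type*} [Fintype ι] [DecidableEq ι] {G : Matrix ι ι ℝ}

lemma quadForm_add_single_sub (hG : G.IsSymm) (q ν : ι → ℝ) (i : ι) (t : ℝ) :
    ((ν + Pi.single i t) ⬝ᵥ G *ᵥ (ν + Pi.single i t) - 2 * (q ⬝ᵥ (ν + Pi.single i t)))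
      - (ν ⬝ᵥ G *ᵥ ν - 2 * (q ⬝ᵥ ν)) = t * (G i i * t + 2 * (G *ᵥ ν - q) i) := by
  have hsymm : ν ⬝ᵥ G *ᵥ Pi.single i t = (G *ᵥ ν) i * t := by
    rw [dotProduct_mulVec, ← mulVec_transpose, hG.eq, dotProduct_single]
  simp only [mulVec_add, dotProduct_add, add_dotProduct]
  rw [hsymm]
  simp only [single_dotProduct, dotProduct_single, mulVec_single, Pi.smul_apply, col_apply,
    MulOpposite.smul_eq_mul_unop, MulOpposite.unop_op, Pi.sub_apply]
  ring

theorem kkt_of_forall_quadForm_le (hG : G.IsSymm) {q ν : ι → ℝ} (hν : ∀ i, 0 ≤ ν i)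
    (hmin : ∀ ν' : ι → ℝ, (∀ i, 0 ≤ ν' i) →
      ν ⬝ᵥ G *ᵥ ν - 2 * (q ⬝ᵥ ν) ≤ ν' ⬝ᵥ G *ᵥ ν' - 2 * (q ⬝ᵥ ν')) (i : ι) :
    0 ≤ (G *ᵥ ν - q) i ∧ ν i * (G *ᵥ ν - q) i = 0 := by
  refine (nonneg_and_mul_eq_zero_of_forall_add_nonneg (C := G i i) (A := 2 * (G *ᵥ ν - q) i)
    (hν i) fun t ht => ?_).imp (fun h => by linarith) (fun h => by linear_combination h / 2)
  rw [← quadForm_add_single_sub hG]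
  refine sub_nonneg.2 (hmin _ fun k => ?_)
  rcases eq_or_ne k i with rfl | hk
  · simpa using ht
  · simpa [hk] using hν k

end QuadraticProgram

section Bessel

variable {m ι : Type*} [Fintype m] [DecidableEq ι]

lemma dotProduct_self_pos_of_ne_zero {v : m → ℝ} (hv : v ≠ 0) : 0 < v ⬝ᵥ v := by
  simpa using dotProduct_self_star_pos_iff.2 hv

lemma pos_of_transpose_mul_self_eq_diagonal {V : Matrix m ι ℝ} {c : ι → ℝ}
    (hV : Vᵀ * V = diagonal c) {j : ι} (hj : V.col j ≠ 0) : 0 < c j := by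
  have h : (Vᵀ * V) j j = c j := by rw [hV, diagonal_apply_eq]
  rw [← h, mul_apply]
  exact dotProduct_self_pos_of_ne_zero hj

theorem sum_sq_vecMul_div_lt_dotProduct_self [Fintype ι] {V : Matrix m ι ℝ} {c : ι → ℝ}
    (hV : Vᵀ * V = diagonal c) {x : m → ℝ} (hx : x ∉ Submodule.span ℝ (Set.range V.col)) :
    ∑ j, (x ᵥ* V) j ^ 2 / c j < x ⬝ᵥ x := by
  set α : ι → ℝ := fun j => (x ᵥ* V) j / c j
  have hxu : x ⬝ᵥ V *ᵥ α = ∑ j, (x ᵥ* V) j * α j := dotProduct_mulVec _ _ _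
  have huu : V *ᵥ α ⬝ᵥ V *ᵥ α = ∑ j, c j * α j * α j := by
    rw [dotProduct_mulVec, vecMul_mulVec, hV, dotProduct_comm, ← mulVec_transpose,
      diagonal_transpose]
    simp only [dotProduct, mulVec_diagonal]
    exact Finset.sum_congr rfl fun j _ => by ring
  have hterm : ∀ j, 2 * ((x ᵥ* V) j * α j) - c j * α j * α j = (x ᵥ* V) j ^ 2 / c j := by
    intro j
    rcases eq_or_ne (c j) 0 with h | h
    · simp [α, h]
    · simp only [α]; field_simp; ring
  have hne : x - V *ᵥ α ≠ 0 := fun h => hx <| by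
    rw [sub_eq_zero.1 h, ← range_mulVecLin]; exact ⟨α, rfl⟩
  have hpos := dotProduct_self_pos_of_ne_zero hne
  rw [sub_dotProduct, dotProduct_sub, dotProduct_sub, dotProduct_comm (V *ᵥ α) x, huu, hxu]
    at hpos
  rw [← Finset.sum_congr rfl fun j _ => hterm j, Finset.sum_sub_distrib, ← Finset.mul_sum]
  linarith

end Bessel

/-- The Bregman divergence of `-log`. -/
noncomputable def itakuraSaito (x y : ℝ) : ℝ := y / x - log (y / x) - 1

lemma itakuraSaito_nonneg {x y : ℝ} (hx : 0 < x) (hy : 0 < y) : 0 ≤ itakuraSaito x y := by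
  have := log_le_sub_one_of_pos (div_pos hy hx)
  unfold itakuraSaito; linarith

lemma eq_of_itakuraSaito_eq_zero {x y : ℝ} (hx : 0 < x) (hy : 0 < y) (h : itakuraSaito x y = 0) :
    y = x := by
  by_contra hne
  have := log_lt_sub_one_of_pos (div_pos hy hx) (by rwa [ne_eq, div_eq_one_iff_eq hx.ne'])
  unfold itakuraSaito at h; linarith

lemma log_sub_log_eq_sub_itakuraSaito {x y : ℝ} (hx : 0 < x) (hy : 0 < y) :
    log y - log x = (y - x) / x - itakuraSaito x y := by
  rw [itakuraSaito, log_div hy.ne' hx.ne', sub_div, div_self hx.ne']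
  ring

section FDSLRM

variable {l : ℕ}

/-- The arrowhead matrix `G` with `G₀₀ = m`, `G₀ⱼ = Gⱼ₀ = cⱼ`, `Gⱼⱼ = cⱼ²`. -/
def doolseGram (m : ℝ) (c : Fin l → ℝ) : Matrix (Fin (l + 1)) (Fin (l + 1)) ℝ :=
  Matrix.of fun i j => Fin.cases (Fin.cases m c j)
    (fun i' => Fin.cases (c i') (fun j' => if i' = j' then c i' ^ 2 else 0) j) i

lemma eq_doolseGram {m : ℝ} {c : Fin l → ℝ} {G : Matrix (Fin (l + 1)) (Fin (l + 1)) ℝ}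
    (h00 : G 0 0 = m) (h0j : ∀ j, G 0 j.succ = c j ∧ G j.succ 0 = c j)
    (hjj : ∀ j, G j.succ j.succ = c j ^ 2) (hij : ∀ i j : Fin l, i ≠ j → G i.succ j.succ = 0) :
    G = doolseGram m c := by
  ext i j
  cases i using Fin.cases <;> cases j using Fin.cases <;>
    simp only [doolseGram, of_apply, Fin.cases_zero, Fin.cases_succ, h00, h0j]
  split_ifs with h
  · rw [h, hjj]
  · exact hij _ _ h

lemma doolseGram_isSymm (m : ℝ) (c : Fin l → ℝ) : (doolseGram m c).IsSymm := by
  refine IsSymm.ext fun i j => ?_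
  cases i using Fin.cases <;> cases j using Fin.cases <;>
    simp only [doolseGram, of_apply, Fin.cases_zero, Fin.cases_succ, eq_comm]
  split_ifs with h <;> simp [h]

lemma doolseGram_mulVec_zero (m : ℝ) (c : Fin l → ℝ) (ν : Fin (l + 1) → ℝ) :
    (doolseGram m c *ᵥ ν) 0 = m * ν 0 + ∑ j, c j * ν j.succ := by
  simp [doolseGram, mulVec, dotProduct, Fin.sum_univ_succ]

lemma doolseGram_mulVec_succ (m : ℝ) (c : Fin l → ℝ) (ν : Fin (l + 1) → ℝ) (j : Fin l) :
    (doolseGram m c *ᵥ ν) j.succ = c j * (ν 0 + c j * ν j.succ) := by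
  simp only [mulVec, dotProduct, doolseGram, of_apply, Fin.sum_univ_succ, Fin.cases_zero,
    Fin.cases_succ, ite_mul, zero_mul, sum_ite_eq, mem_univ, ↓reduceIte]
  ring

/-- KKT conditions for minimising `ν ⬝ᵥ doolseGram m c *ᵥ ν - 2 * (Fin.cons s q ⬝ᵥ ν)` over
`ν ≥ 0`. -/
structure IsDoolseKKT (m s : ℝ) (c q : Fin l → ℝ) (ν : Fin (l + 1) → ℝ) : Prop where
  le_zero : s ≤ m * ν 0 + ∑ j, c j * ν j.succ
  slack_zero : ν 0 * (m * ν 0 + ∑ j, c j * ν j.succ - s) = 0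
  le_succ : ∀ j, q j ≤ c j * (ν 0 + c j * ν j.succ)
  slack_succ : ∀ j, ν j.succ * (c j * (ν 0 + c j * ν j.succ) - q j) = 0

variable {m r s : ℝ} {c q : Fin l → ℝ} {ν d d' : Fin (l + 1) → ℝ}

lemma isDoolseKKT_of_forall
    (h : ∀ i, 0 ≤ (doolseGram m c *ᵥ ν - Fin.cons s q : Fin (l + 1) → ℝ) i ∧
      ν i * (doolseGram m c *ᵥ ν - Fin.cons s q : Fin (l + 1) → ℝ) i = 0) :
    IsDoolseKKT m s c q ν := by
  have h0 := h 0
  have hsucc := fun j : Fin l => h j.succ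
  simp only [Pi.sub_apply, doolseGram_mulVec_zero, doolseGram_mulVec_succ, Fin.cons_zero,
    Fin.cons_succ, sub_nonneg] at h0 hsucc
  exact ⟨h0.1, h0.2, fun j => (hsucc j).1, fun j => (hsucc j).2⟩

theorem IsDoolseKKT.pos_zero (h : IsDoolseKKT m s c q ν) (hν : ∀ i, 0 ≤ ν i) (hc : ∀ j, 0 < c j)
    (hq : ∀ j, 0 ≤ q j) (hs : ∑ j, q j / c j < s) : 0 < ν 0 := by
  refine (hν 0).lt_of_ne fun h0 => ?_
  have hle : ∀ j, c j * ν j.succ ≤ q j / c j := fun j => by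
    have := h.slack_succ j
    rw [← h0] at this
    rcases (hν j.succ).eq_or_lt with hb | hb
    · rw [← hb, mul_zero]
      exact div_nonneg (hq j) (hc j).le
    · rw [le_div_iff₀ (hc j)]
      linarith [(mul_eq_zero.1 this).resolve_left hb.ne']
  have := h.le_zero
  rw [← h0] at this
  linarith [Finset.sum_le_sum (s := univ) fun j _ => hle j]

noncomputable def mleObjective (r s : ℝ) (c q : Fin l → ℝ) (d : Fin (l + 1) → ℝ) : ℝ :=
  -r * log (d 0) - ∑ j, log (d 0 - d j.succ * c j) + d 0 * s - ∑ j, d j.succ * q j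

def mleDomain (c : Fin l → ℝ) : Set (Fin (l + 1) → ℝ) :=
  {d | (∀ j : Fin l, 0 ≤ d j.succ) ∧ ∀ j : Fin l, d j.succ * c j < d 0}

structure IsMLEKKT (r s : ℝ) (c q : Fin l → ℝ) (d : Fin (l + 1) → ℝ) : Prop where
  stationary : r / d 0 + ∑ j, 1 / (d 0 - d j.succ * c j) = s
  le_succ : ∀ j, q j ≤ c j / (d 0 - d j.succ * c j)
  slack_succ : ∀ j, d j.succ * (c j / (d 0 - d j.succ * c j) - q j) = 0

lemma pos_zero_of_mem_mleDomain (hl : 0 < l) (hc : ∀ j, 0 ≤ c j) (hd : d ∈ mleDomain c) :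
    0 < d 0 :=
  (mul_nonneg (hd.1 ⟨0, hl⟩) (hc ⟨0, hl⟩)).trans_lt (hd.2 ⟨0, hl⟩)

theorem IsMLEKKT.mleObjective_sub_eq (h : IsMLEKKT r s c q d) (hd0 : 0 < d 0)
    (hd : ∀ j, d j.succ * c j < d 0) (hd0' : 0 < d' 0) (hd' : ∀ j, d' j.succ * c j < d' 0) :
    mleObjective r s c q d' - mleObjective r s c q d = r * itakuraSaito (d 0) (d' 0) +
      ∑ j, (itakuraSaito (d 0 - d j.succ * c j) (d' 0 - d' j.succ * c j) +
        d' j.succ * (c j / (d 0 - d j.succ * c j) - q j)) := by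
  have hterm : ∀ j, (log (d' 0 - d' j.succ * c j) + d' j.succ * q j) -
      (log (d 0 - d j.succ * c j) + d j.succ * q j) =
      (d' 0 - d 0) * (1 / (d 0 - d j.succ * c j)) -
        (itakuraSaito (d 0 - d j.succ * c j) (d' 0 - d' j.succ * c j) +
          d' j.succ * (c j / (d 0 - d j.succ * c j) - q j)) := fun j => by
    linear_combination log_sub_log_eq_sub_itakuraSaito (sub_pos.2 (hd j)) (sub_pos.2 (hd' j))
      + h.slack_succ j
  have hsum := Finset.sum_congr (s₁ := univ) rfl fun j _ => hterm j
  simp only [Finset.sum_sub_distrib, Finset.sum_add_distrib, ← Finset.mul_sum] at hsum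
  rw [mleObjective, mleObjective, Finset.sum_add_distrib]
  linear_combination (-r) * log_sub_log_eq_sub_itakuraSaito hd0 hd0' - hsum -
    (d' 0 - d 0) * h.stationary

lemma IsMLEKKT.mul_partial_nonneg (h : IsMLEKKT r s c q d) (hd' : d' ∈ mleDomain c) (j : Fin l) :
    0 ≤ d' j.succ * (c j / (d 0 - d j.succ * c j) - q j) :=
  mul_nonneg (hd'.1 j) (sub_nonneg.2 (h.le_succ j))

theorem IsMLEKKT.le_mleObjective (h : IsMLEKKT r s c q d) (hr : 0 ≤ r) (hd0 : 0 < d 0)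
    (hd : ∀ j, d j.succ * c j < d 0) (hd0' : 0 < d' 0) (hd' : d' ∈ mleDomain c) :
    mleObjective r s c q d ≤ mleObjective r s c q d' := by
  have key := h.mleObjective_sub_eq hd0 hd hd0' hd'.2
  have hsum := Finset.sum_nonneg fun j (_ : j ∈ univ) => add_nonneg
    (itakuraSaito_nonneg (sub_pos.2 (hd j)) (sub_pos.2 (hd'.2 j))) (h.mul_partial_nonneg hd' j)
  linarith [mul_nonneg hr (itakuraSaito_nonneg hd0 hd0')]

theorem IsMLEKKT.eq_of_mleObjective_le (h : IsMLEKKT r s c q d) (hr : 0 < r) (hc : ∀ j, c j ≠ 0)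
    (hd0 : 0 < d 0) (hd : ∀ j, d j.succ * c j < d 0) (hd0' : 0 < d' 0) (hd' : d' ∈ mleDomain c)
    (hle : mleObjective r s c q d' ≤ mleObjective r s c q d) : d' = d := by
  have key := h.mleObjective_sub_eq hd0 hd hd0' hd'.2
  have hIS j := itakuraSaito_nonneg (sub_pos.2 (hd j)) (sub_pos.2 (hd'.2 j))
  have hterm j (_ : j ∈ univ) := add_nonneg (hIS j) (h.mul_partial_nonneg hd' j)
  have hr0 := mul_nonneg hr.le (itakuraSaito_nonneg hd0 hd0')
  have hsum := Finset.sum_nonneg hterm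
  have h0 : d' 0 = d 0 := eq_of_itakuraSaito_eq_zero hd0 hd0' <|
    (mul_eq_zero.1 (by linarith : r * itakuraSaito (d 0) (d' 0) = 0)).resolve_left hr.ne'
  have hzero := (Finset.sum_eq_zero_iff_of_nonneg hterm).1 (by linarith)
  refine funext fun i => Fin.cases h0 (fun j => ?_) i
  have hIS0 := le_antisymm (by linarith [hzero j (mem_univ j), h.mul_partial_nonneg hd' j]) (hIS j)
  have := eq_of_itakuraSaito_eq_zero (sub_pos.2 (hd j)) (sub_pos.2 (hd'.2 j)) hIS0
  exact mul_right_cancel₀ (hc j) (by linarith)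

end FDSLRM

section Transform

variable {l : ℕ} {m s : ℝ} {c q : Fin l → ℝ} {ν : Fin (l + 1) → ℝ}

noncomputable def mleTransform (c : Fin l → ℝ) (ν : Fin (l + 1) → ℝ) : Fin (l + 1) → ℝ :=
  Fin.cons (1 / ν 0) fun j => ν j.succ / (ν 0 * (ν 0 + c j * ν j.succ))

@[simp] lemma mleTransform_zero : mleTransform c ν 0 = 1 / ν 0 := rfl

@[simp] lemma mleTransform_succ (j : Fin l) :
    mleTransform c ν j.succ = ν j.succ / (ν 0 * (ν 0 + c j * ν j.succ)) := rfl

lemma mleTransform_zero_sub_succ_mul {j : Fin l} (hν0 : ν 0 ≠ 0)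
    (hw : ν 0 + c j * ν j.succ ≠ 0) :
    mleTransform c ν 0 - mleTransform c ν j.succ * c j = 1 / (ν 0 + c j * ν j.succ) := by
  have hw' : ν 0 + ν j.succ * c j ≠ 0 := by rwa [mul_comm]
  rw [mleTransform_zero, mleTransform_succ]
  field_simp
  ring

variable (hc : ∀ j, 0 ≤ c j) (hν : ∀ i, 0 ≤ ν i) (hν0 : 0 < ν 0)
include hc hν hν0

lemma add_mul_succ_pos (j : Fin l) : 0 < ν 0 + c j * ν j.succ :=
  add_pos_of_pos_of_nonneg hν0 (mul_nonneg (hc j) (hν _))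

theorem mleTransform_mem_mleDomain : mleTransform c ν ∈ mleDomain c := by
  refine ⟨fun j => ?_, fun j => ?_⟩
  · exact div_nonneg (hν _) (mul_pos hν0 (add_mul_succ_pos hc hν hν0 j)).le
  · have hw := add_mul_succ_pos hc hν hν0 j
    have := mleTransform_zero_sub_succ_mul hν0.ne' hw.ne'
    linarith [one_div_pos.2 hw]

theorem IsDoolseKKT.isMLEKKT_mleTransform (h : IsDoolseKKT m s c q ν) :
    IsMLEKKT (m - l) s c q (mleTransform c ν) := by
  have hw := add_mul_succ_pos hc hν hν0
  have key j :
      1 / (mleTransform c ν 0 - mleTransform c ν j.succ * c j) = ν 0 + c j * ν j.succ := by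
    rw [mleTransform_zero_sub_succ_mul hν0.ne' (hw j).ne', one_div_one_div]
  refine ⟨?_, fun j => ?_, fun j => ?_⟩
  · have hs := (mul_eq_zero.1 h.slack_zero).resolve_left hν0.ne'
    rw [Finset.sum_congr rfl fun j _ => key j, Finset.sum_add_distrib, Finset.sum_const,
      card_univ, Fintype.card_fin, nsmul_eq_mul, mleTransform_zero, one_div, div_inv_eq_mul]
    linarith
  · rw [div_eq_mul_one_div, key]
    exact h.le_succ j
  · rw [div_eq_mul_one_div, key, mleTransform_succ, div_mul_eq_mul_div, h.slack_succ, zero_div]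

end Transform

theorem mleTransform_injOn {l : ℕ} {c : Fin l → ℝ} (hc : ∀ j, 0 < c j) :
    Set.InjOn (mleTransform c) {ν | (∀ i, 0 ≤ ν i) ∧ 0 < ν 0} := by
  rintro ν ⟨hν, hν0⟩ ν' ⟨hν', hν0'⟩ h
  have h0 : ν 0 = ν' 0 := by simpa using congrFun h 0
  refine funext fun i => Fin.cases h0 (fun j => ?_) i
  have e : mleTransform c ν 0 - mleTransform c ν j.succ * c j =
      mleTransform c ν' 0 - mleTransform c ν' j.succ * c j := by rw [h]
  have hc' j : 0 ≤ c j := (hc j).le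
  rw [mleTransform_zero_sub_succ_mul hν0.ne' (add_mul_succ_pos hc' hν hν0 j).ne',
    mleTransform_zero_sub_succ_mul hν0'.ne' (add_mul_succ_pos hc' hν' hν0' j).ne', one_div,
    one_div, _root_.inv_inj, h0] at e
  exact mul_left_cancel₀ (hc j).ne' (by linarith)

theorem stmt_19_general {n l : ℕ} (hl : 0 < l)
    (V : Matrix (Fin n) (Fin l) ℝ)
    (hcols : ∀ j : Fin l, (fun i => V i j) ≠ 0)
    (nv : Fin l → ℝ)
    (hVV : Vᵀ * V = Matrix.diagonal nv)
    (ε : Fin n → ℝ)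
    (hεspan : ε ∉ Submodule.span ℝ (Set.range fun j : Fin l => fun i => V i j))
    (nstar : ℝ)
    (hnstar : (l : ℝ) < nstar)
    (G : Matrix (Fin (l + 1)) (Fin (l + 1)) ℝ)
    (hG00 : G 0 0 = nstar)
    (hG0j : ∀ j : Fin l, G 0 j.succ = nv j ∧ G j.succ 0 = nv j)
    (hGjj : ∀ j : Fin l, G j.succ j.succ = nv j ^ 2)
    (hGij : ∀ i j : Fin l, i ≠ j → G i.succ j.succ = 0)
    (q : Fin (l + 1) → ℝ)
    (hq0 : q 0 = ∑ i, ε i ^ 2)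
    (hqj : ∀ j : Fin l, q j.succ = (∑ i, ε i * V i j) ^ 2)
    (f0 : (Fin (l + 1) → ℝ) → ℝ)
    (hf0 : ∀ ν, f0 ν = ν ⬝ᵥ G.mulVec ν - 2 * (q ⬝ᵥ ν))
    (tr : (Fin (l + 1) → ℝ) → (Fin (l + 1) → ℝ))
    (htr0 : ∀ ν, tr ν 0 = 1 / ν 0)
    (htrj : ∀ ν, ∀ j : Fin l,
      tr ν j.succ = ν j.succ / (ν 0 * (ν 0 + nv j * ν j.succ)))
    (Dset : Set (Fin (l + 1) → ℝ))
    (hDset : Dset = {d | (∀ j : Fin l, 0 ≤ d j.succ) ∧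
      ∀ j : Fin l, d j.succ * nv j < d 0})
    (g : (Fin (l + 1) → ℝ) → ℝ)
    (hg : ∀ d, g d = -(nstar - (l : ℝ)) * Real.log (d 0)
      - ∑ j : Fin l, Real.log (d 0 - d j.succ * nv j)
      + d 0 * (∑ i, ε i ^ 2)
      - ∑ j : Fin l, d j.succ * (∑ i, ε i * V i j) ^ 2)
    (νhat : Fin (l + 1) → ℝ) (hνhat : ∀ j, 0 ≤ νhat j)
    (hmin : ∀ ν : Fin (l + 1) → ℝ, (∀ j, 0 ≤ ν j) → f0 νhat ≤ f0 ν) :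
    0 < νhat 0 ∧
    ∀ ν : Fin (l + 1) → ℝ, (∀ j, 0 ≤ ν j) → 0 < ν 0 →
      ((∀ ν' : Fin (l + 1) → ℝ, (∀ j, 0 ≤ ν' j) → f0 ν ≤ f0 ν') ↔
        (tr ν ∈ Dset ∧ ∀ d ∈ Dset, g (tr ν) ≤ g d)) := by
  set s := ∑ i, ε i ^ 2
  set Q : Fin l → ℝ := fun j => (∑ i, ε i * V i j) ^ 2
  obtain rfl : G = doolseGram nstar nv := eq_doolseGram hG00 hG0j hGjj hGij
  obtain rfl : q = Fin.cons s Q := funext fun i => Fin.cases hq0 hqj i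
  obtain rfl : tr = mleTransform nv :=
    funext fun ν => funext fun i => Fin.cases (htr0 ν) (htrj ν) i
  obtain rfl : g = mleObjective (nstar - l) s nv Q := funext hg
  subst hDset
  have hc j : 0 < nv j := pos_of_transpose_mul_self_eq_diagonal hVV (hcols j)
  have hr : 0 < nstar - l := sub_pos.2 hnstar
  have hbessel : ∑ j, Q j / nv j < s :=
    (sum_sq_vecMul_div_lt_dotProduct_self hVV hεspan).trans_eq (by simp [s, dotProduct, sq])
  have hkkt ν (hν : ∀ i, 0 ≤ ν i) (hνmin : ∀ ν', (∀ i, 0 ≤ ν' i) → f0 ν ≤ f0 ν') :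
      IsDoolseKKT nstar s nv Q ν :=
    isDoolseKKT_of_forall <| kkt_of_forall_quadForm_le (doolseGram_isSymm _ _) hν
      fun ν' hν' => by simpa only [hf0] using hνmin ν' hν'
  have hpos := (hkkt νhat hνhat hmin).pos_zero hνhat hc (fun j => sq_nonneg _) hbessel
  have hc' j : 0 ≤ nv j := (hc j).le
  have hdom {ν : Fin (l + 1) → ℝ} (hν : ∀ i, 0 ≤ ν i) (hν0 : 0 < ν 0) :=
    mleTransform_mem_mleDomain hc' hν hν0
  have hd0 {d : Fin (l + 1) → ℝ} (hd : d ∈ mleDomain nv) := pos_zero_of_mem_mleDomain hl hc' hd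
  refine ⟨hpos, fun ν hν hν0 =>
    ⟨fun hνmin => ⟨hdom hν hν0, fun d hd => ?_⟩, fun ⟨hd, hνmin⟩ => ?_⟩⟩
  · exact ((hkkt ν hν hνmin).isMLEKKT_mleTransform hc' hν hν0).le_mleObjective hr.le
      (hd0 (hdom hν hν0)) (hdom hν hν0).2 (hd0 hd) hd
  · have hhat := (hkkt νhat hνhat hmin).isMLEKKT_mleTransform hc' hνhat hpos
    have heq := hhat.eq_of_mleObjective_le hr (fun j => (hc j).ne') (hd0 (hdom hνhat hpos))
      (hdom hνhat hpos).2 (hd0 hd) hd (hνmin _ (hdom hνhat hpos))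
    obtain rfl := mleTransform_injOn hc ⟨hν, hν0⟩ ⟨hνhat, hpos⟩ heq
    exact hmin

/-- Equivalence of NN-(M)DOOLSE and (RE)MLE in an orthogonal FDSLRM with
`ε ∉ span{v₁,…,v_l}` and `n* > l`: the unique nonnegative minimizer `ν̂` of
the NN-(M)DOOLSE objective `f₀(ν) = ν'Gν − 2q'ν` has `ν̂₀ > 0`, and a
nonnegative `ν` with `ν₀ > 0` minimizes `f₀` over the orthant iff its image
under the bijective transformation `d₀ = 1/ν₀`,
`dⱼ = νⱼ/(ν₀(ν₀ + ‖vⱼ‖²νⱼ))` minimizes the equivalent (RE)MLE convex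
objective `g(d) = −(n*−l)log d₀ − ∑ⱼ log(d₀ − dⱼ‖vⱼ‖²) + d₀ε'ε − ∑ⱼ dⱼ(ε'vⱼ)²`
over `{d : dⱼ ≥ 0, d₀ > dⱼ‖vⱼ‖²}`. -/
theorem stmt_19 {n k l : ℕ} (hn : 0 < n) (hk : 0 < k) (hl : 0 < l)
    (hnkl : k + l < n)
    (F : Matrix (Fin n) (Fin k) ℝ) (hF : F.rank = k)
    (V : Matrix (Fin n) (Fin l) ℝ)
    (hcols : ∀ j : Fin l, (fun i => V i j) ≠ 0)
    (nv : Fin l → ℝ) (hnv : ∀ j, nv j = ∑ i, V i j ^ 2)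
    (hFV : Fᵀ * V = 0) (hVV : Vᵀ * V = Matrix.diagonal nv)
    (Mf : Matrix (Fin n) (Fin n) ℝ) (hMf : Mf = 1 - F * (Fᵀ * F)⁻¹ * Fᵀ)
    (x : Fin n → ℝ) (ε : Fin n → ℝ) (hε : ε = Mf.mulVec x)
    (hεspan : ε ∉ Submodule.span ℝ (Set.range fun j : Fin l => fun i => V i j))
    (nstar : ℝ) (hnstar' : nstar = (n : ℝ) ∨ nstar = (n : ℝ) - (k : ℝ))
    (hnstar : (l : ℝ) < nstar)
    (G : Matrix (Fin (l + 1)) (Fin (l + 1)) ℝ)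
    (hG00 : G 0 0 = nstar)
    (hG0j : ∀ j : Fin l, G 0 j.succ = nv j ∧ G j.succ 0 = nv j)
    (hGjj : ∀ j : Fin l, G j.succ j.succ = nv j ^ 2)
    (hGij : ∀ i j : Fin l, i ≠ j → G i.succ j.succ = 0)
    (q : Fin (l + 1) → ℝ)
    (hq0 : q 0 = ∑ i, ε i ^ 2)
    (hqj : ∀ j : Fin l, q j.succ = (∑ i, ε i * V i j) ^ 2)
    (f0 : (Fin (l + 1) → ℝ) → ℝ)
    (hf0 : ∀ ν, f0 ν = ν ⬝ᵥ G.mulVec ν - 2 * (q ⬝ᵥ ν))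
    (tr : (Fin (l + 1) → ℝ) → (Fin (l + 1) → ℝ))
    (htr0 : ∀ ν, tr ν 0 = 1 / ν 0)
    (htrj : ∀ ν, ∀ j : Fin l,
      tr ν j.succ = ν j.succ / (ν 0 * (ν 0 + nv j * ν j.succ)))
    (Dset : Set (Fin (l + 1) → ℝ))
    (hDset : Dset = {d | (∀ j : Fin l, 0 ≤ d j.succ) ∧
      ∀ j : Fin l, d j.succ * nv j < d 0})
    (g : (Fin (l + 1) → ℝ) → ℝ)
    (hg : ∀ d, g d = -(nstar - (l : ℝ)) * Real.log (d 0)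
      - ∑ j : Fin l, Real.log (d 0 - d j.succ * nv j)
      + d 0 * (∑ i, ε i ^ 2)
      - ∑ j : Fin l, d j.succ * (∑ i, ε i * V i j) ^ 2)
    (νhat : Fin (l + 1) → ℝ) (hνhat : ∀ j, 0 ≤ νhat j)
    (hmin : ∀ ν : Fin (l + 1) → ℝ, (∀ j, 0 ≤ ν j) → f0 νhat ≤ f0 ν) :
    0 < νhat 0 ∧
    ∀ ν : Fin (l + 1) → ℝ, (∀ j, 0 ≤ ν j) → 0 < ν 0 →
      ((∀ ν' : Fin (l + 1) → ℝ, (∀ j, 0 ≤ ν' j) → f0 ν ≤ f0 ν') ↔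
        (tr ν ∈ Dset ∧ ∀ d ∈ Dset, g (tr ν) ≤ g d)) :=
  stmt_19_general hl V hcols nv hVV ε hεspan nstar hnstar G hG00 hG0j hGjj hGij q hq0 hqj f0 hf0 tr
    htr0 htrj Dset hDset g hg νhat hνhat hmin
end
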